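/- arXiv:1307.1626 — 6 statements merged into one kernel-verified Lean document; each statement's English description precedes it below -/
import Mathlib

section
/- Let (T(t))_{t≥0} be a bounded C₀-semigroup on a complex Banach space X with M := sup_{t≥0}‖T(t)‖. Let x, u, v ∈ X satisfy T(t)x = x − ∫₀^t T(r)u dr and T(t)u = u − ∫₀^t T(r)v dr for all t ≥ 0 (i.e. u = Ax and v = A²x). Then for all n ≥ 1 and t > 0 (Dunford–Segal approximation): ‖T(t)x − e^{−nt} Σ_{k=0}^∞ ((nt)^k/k!) T(k/n)x‖ ≤ 8M (t/n) ‖v‖, where the series converges absolutely in X. -/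
/-! Because `x ∈ dom(A²)`, the two integral identities alone give the second-order Taylor
formula `T(s)x = T(t)x - (s - t) T(t)u + R` with `‖R‖ ≤ M‖v‖(s - t)²`. Averaging it over the
nodes `s = k/n` with Poisson weights of rate `nt`, whose mean is `t` and whose variance is `t/n`,
cancels the first-order term and leaves an error of at most `M‖v‖ t/n`. -/

open MeasureTheory Set Complex

open scoped Nat

noncomputable def poissonWeight (l : ℝ) (k : ℕ) : ℝ := Real.exp (-l) * l ^ k / k !

namespace poissonWeight

lemma nonneg {l : ℝ} (hl : 0 ≤ l) (k : ℕ) : 0 ≤ poissonWeight l k := by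
  unfold poissonWeight; positivity

lemma succ_mul (l : ℝ) (k : ℕ) :
    poissonWeight l (k + 1) * (k + 1 : ℕ) = l * poissonWeight l k := by
  simp only [poissonWeight, Nat.factorial_succ, Nat.cast_mul, pow_succ]
  field_simp

lemma hasSum (l : ℝ) : HasSum (poissonWeight l) 1 := by
  have h := (NormedSpace.expSeries_div_hasSum_exp l).mul_left (Real.exp (-l))
  rw [← Real.exp_eq_exp_ℝ, ← Real.exp_add, neg_add_cancel, Real.exp_zero] at h
  exact h.congr_fun fun k => mul_div_assoc ..

lemma hasSum_mul_cast_mul {l a : ℝ} {g : ℕ → ℝ}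
    (h : HasSum (fun k => poissonWeight l k * g (k + 1)) a) :
    HasSum (fun k : ℕ => poissonWeight l k * (k * g k)) (l * a) := by
  refine (hasSum_nat_add_iff' 1).mp ?_
  simp only [Finset.range_one, Finset.sum_singleton, Nat.cast_zero, zero_mul, mul_zero, sub_zero]
  refine (h.mul_left l).congr_fun fun k => ?_
  rw [← mul_assoc, ← mul_assoc, ← succ_mul]

lemma hasSum_mul_cast (l : ℝ) : HasSum (fun k : ℕ => poissonWeight l k * k) l := by
  simpa using hasSum_mul_cast_mul (g := fun _ => 1) (a := 1) (by simpa using hasSum l)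

lemma hasSum_mul_sq_cast_sub (l : ℝ) :
    HasSum (fun k : ℕ => poissonWeight l k * (k - l) ^ 2) l := by
  have second : HasSum (fun k : ℕ => poissonWeight l k * (k * k)) (l * (l + 1)) :=
    hasSum_mul_cast_mul (by simpa [mul_add] using (hasSum_mul_cast l).add (hasSum l))
  have h := (second.sub ((hasSum_mul_cast l).mul_left (2 * l))).add ((hasSum l).mul_left (l ^ 2))
  rw [show l * (l + 1) - 2 * l * l + l ^ 2 * 1 = l by ring] at h
  exact h.congr_fun fun k => by ring

lemma hasSum_mul_cast_div {c : ℝ} (hc : c ≠ 0) (t : ℝ) :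
    HasSum (fun k : ℕ => poissonWeight (c * t) k * (k / c)) t := by
  have h := (hasSum_mul_cast (c * t)).div_const c
  rw [mul_div_cancel_left₀ t hc] at h
  exact h.congr_fun fun k => (mul_div_assoc ..).symm

lemma hasSum_mul_sq_cast_div_sub {c : ℝ} (hc : c ≠ 0) (t : ℝ) :
    HasSum (fun k : ℕ => poissonWeight (c * t) k * (k / c - t) ^ 2) (t / c) := by
  have h := (hasSum_mul_sq_cast_sub (c * t)).div_const (c ^ 2)
  rw [show c * t / c ^ 2 = t / c by field_simp] at h
  exact h.congr_fun fun k => by field_simp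

end poissonWeight

section

variable {X : Type*} [NormedAddCommGroup X] [NormedSpace ℝ X]

lemma uIcc_subset_Ici_of_le {a b c : ℝ} (ha : c ≤ a) (hb : c ≤ b) : uIcc a b ⊆ Ici c :=
  fun _ hr => le_trans (le_min ha hb) hr.1

lemma sub_eq_intervalIntegral_of_eq_sub_integral {F G : ℝ → X} {c : X}
    (hG : ContinuousOn G (Ici 0)) (hF : ∀ r, 0 ≤ r → F r = c - ∫ ρ in 0..r, G ρ)
    {a b : ℝ} (ha : 0 ≤ a) (hb : 0 ≤ b) : F a - F b = ∫ r in a..b, G r := by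
  rw [hF a ha, hF b hb, ← intervalIntegral.integral_add_adjacent_intervals
    (hG.mono (uIcc_subset_Ici_of_le le_rfl ha)).intervalIntegrable
    (hG.mono (uIcc_subset_Ici_of_le ha hb)).intervalIntegrable]
  abel

lemma norm_sub_add_smul_le_of_eq_sub_integral [CompleteSpace X] {F G H : ℝ → X} {c d : X}
    {C : ℝ}
    (hG : ContinuousOn G (Ici 0)) (hH : ContinuousOn H (Ici 0))
    (hF : ∀ r, 0 ≤ r → F r = c - ∫ ρ in 0..r, G ρ)
    (hGH : ∀ r, 0 ≤ r → G r = d - ∫ ρ in 0..r, H ρ)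
    (hHC : ∀ r, 0 ≤ r → ‖H r‖ ≤ C) {s t : ℝ} (hs : 0 ≤ s) (ht : 0 ≤ t) :
    ‖F s - F t + (s - t) • G t‖ ≤ C * (s - t) ^ 2 := by
  have hC : 0 ≤ C := (norm_nonneg _).trans (hHC 0 le_rfl)
  have remainder : F s - F t + (s - t) • G t = ∫ r in t..s, ∫ ρ in t..r, H ρ := calc
    F s - F t + (s - t) • G t = ∫ r in t..s, (G t - G r) := by
      rw [intervalIntegral.integral_sub intervalIntegrable_const
        (hG.mono (uIcc_subset_Ici_of_le ht hs)).intervalIntegrable,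
        intervalIntegral.integral_const, ← sub_eq_intervalIntegral_of_eq_sub_integral hG hF ht hs]
      abel
    _ = ∫ r in t..s, ∫ ρ in t..r, H ρ := intervalIntegral.integral_congr fun r hr =>
      sub_eq_intervalIntegral_of_eq_sub_integral hH hGH ht (uIcc_subset_Ici_of_le ht hs hr)
  have inner : ∀ r ∈ uIoc t s, ‖∫ ρ in t..r, H ρ‖ ≤ C * |s - t| := fun r hr => calc
    ‖∫ ρ in t..r, H ρ‖ ≤ C * |r - t| := intervalIntegral.norm_integral_le_of_norm_le_const
      fun ρ hρ => hHC ρ (uIcc_subset_Ici_of_le ht (uIcc_subset_Ici_of_le ht hs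
        (uIoc_subset_uIcc hr)) (uIoc_subset_uIcc hρ))
    _ ≤ C * |s - t| := mul_le_mul_of_nonneg_left
      (abs_sub_left_of_mem_uIcc (uIoc_subset_uIcc hr)) hC
  calc ‖F s - F t + (s - t) • G t‖ ≤ C * |s - t| * |s - t| := by
        rw [remainder]; exact intervalIntegral.norm_integral_le_of_norm_le_const inner
    _ = C * (s - t) ^ 2 := by rw [mul_assoc, abs_mul_abs_self, sq]

theorem norm_tsum_smul_sub_le_of_taylor {ι : Type*} {p s : ι → ℝ} {μ σ C : ℝ} {y : ι → X}
    {y₀ g : X}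
    (hp : ∀ i, 0 ≤ p i) (hp1 : HasSum p 1) (hmean : HasSum (fun i => p i * s i) μ)
    (hvar : HasSum (fun i => p i * (s i - μ) ^ 2) σ) (hy : Summable fun i => p i • y i)
    (htaylor : ∀ i, ‖y i - y₀ - (s i - μ) • g‖ ≤ C * (s i - μ) ^ 2) :
    ‖∑' i, p i • y i - y₀‖ ≤ C * σ := by
  have centered : HasSum (fun i => p i * (s i - μ)) 0 := by
    have h := hmean.sub (hp1.mul_right μ)
    rw [one_mul, sub_self] at h
    exact h.congr_fun fun i => by ring
  have remainder :
      HasSum (fun i => p i • (y i - y₀ - (s i - μ) • g)) (∑' i, p i • y i - y₀) := by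
    have h := (hy.hasSum.sub (hp1.smul_const y₀)).sub (centered.smul_const g)
    rw [one_smul, zero_smul, sub_zero] at h
    exact h.congr_fun fun i => by rw [smul_sub, smul_sub, smul_smul]
  refine remainder.norm_le_of_bounded (hvar.mul_left C) fun i => ?_
  rw [norm_smul, Real.norm_of_nonneg (hp i)]
  calc p i * ‖y i - y₀ - (s i - μ) • g‖ ≤ p i * (C * (s i - μ) ^ 2) :=
        mul_le_mul_of_nonneg_left (htaylor i) (hp i)
    _ = C * (p i * (s i - μ) ^ 2) := by ring

end

theorem statement7_general {X : Type*} [NormedAddCommGroup X] [NormedSpace ℂ X] [CompleteSpace X]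
    (T : ℝ → X →L[ℂ] X) (M : ℝ)
    (hTcont : ∀ x : X, ContinuousOn (fun t => T t x) (Ici 0))
    (hM : ∀ t : ℝ, 0 ≤ t → ‖T t‖ ≤ M)
    (x u v : X)
    (hxu : ∀ r : ℝ, 0 ≤ r → T r x = x - ∫ ρ in (0:ℝ)..r, T ρ u)
    (huv : ∀ r : ℝ, 0 ≤ r → T r u = u - ∫ ρ in (0:ℝ)..r, T ρ v)
    (n : ℕ) (hn : 1 ≤ n) (t : ℝ) (ht : 0 < t) :
    Summable (fun k : ℕ => ‖(((n:ℝ) * t) ^ k / (Nat.factorial k : ℝ)) • T ((k:ℝ) / n) x‖) ∧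
    ‖T t x - Real.exp (-((n:ℝ) * t)) •
        ∑' k : ℕ, (((n:ℝ) * t) ^ k / (Nat.factorial k : ℝ)) • T ((k:ℝ) / n) x‖ ≤
      8 * M * (t / n) * ‖v‖ := by
  have hn0 : (n : ℝ) ≠ 0 := Nat.cast_ne_zero.2 (by omega)
  have hM0 : 0 ≤ M := (norm_nonneg _).trans (hM 0 le_rfl)
  have hTbound : ∀ r, 0 ≤ r → ∀ y, ‖T r y‖ ≤ M * ‖y‖ := fun r hr =>
    (T r).le_of_opNorm_le (hM r hr)
  have summable : Summable fun k : ℕ => ‖(((n:ℝ) * t) ^ k / k !) • T ((k:ℝ) / n) x‖ := by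
    refine .of_nonneg_of_le (fun _ => norm_nonneg _) (fun k => ?_)
      ((Real.summable_pow_div_factorial ((n:ℝ) * t)).mul_right (M * ‖x‖))
    rw [norm_smul, Real.norm_of_nonneg (by positivity)]
    exact mul_le_mul_of_nonneg_left (hTbound _ (by positivity) x) (by positivity)
  refine ⟨summable, ?_⟩
  have taylor : ∀ k : ℕ, ‖T ((k:ℝ) / n) x - T t x - ((k:ℝ) / n - t) • -T t u‖ ≤
      M * ‖v‖ * ((k:ℝ) / n - t) ^ 2 := fun k => by
    simpa only [smul_neg, sub_neg_eq_add] using norm_sub_add_smul_le_of_eq_sub_integral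
      (hTcont u) (hTcont v) hxu huv (fun r hr => hTbound r hr v) (by positivity) ht.le
  have poisson_weighted : ∀ k : ℕ, Real.exp (-((n:ℝ) * t)) •
      ((((n:ℝ) * t) ^ k / k !) • T ((k:ℝ) / n) x) = poissonWeight (n * t) k • T ((k:ℝ) / n) x :=
    fun k => by rw [smul_smul, poissonWeight, mul_div_assoc]
  have average_bound : ‖∑' k : ℕ, poissonWeight (n * t) k • T ((k:ℝ) / n) x - T t x‖ ≤
      M * ‖v‖ * (t / n) :=
    norm_tsum_smul_sub_le_of_taylor (poissonWeight.nonneg (by positivity))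
      (poissonWeight.hasSum _) (poissonWeight.hasSum_mul_cast_div hn0 t)
      (poissonWeight.hasSum_mul_sq_cast_div_sub hn0 t)
      ((summable.of_norm.const_smul _).congr poisson_weighted) taylor
  rw [← tsum_const_smul'', tsum_congr poisson_weighted, norm_sub_rev]
  calc _ ≤ M * ‖v‖ * (t / n) := average_bound
    _ ≤ 8 * M * (t / n) * ‖v‖ := by
        have : 0 ≤ M * (t / n) * ‖v‖ := by positivity
        linarith

/-- Rate in the Dunford–Segal approximation on `dom(A²)`: for a bounded `C₀`-semigroup `T`
with `sup ‖T(t)‖ ≤ M` and `x ∈ dom(A²)` (witnessed by `u = Ax`, `v = A²x`),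
`‖T(t)x - e^(-nt) Σ_k ((nt)^k/k!) T(k/n)x‖ ≤ 8M(t/n)‖v‖`, the series converging
absolutely. -/
theorem statement7 {X : Type*} [NormedAddCommGroup X] [NormedSpace ℂ X] [CompleteSpace X]
    (T : ℝ → X →L[ℂ] X) (M : ℝ)
    (hT0 : T 0 = 1)
    (hTadd : ∀ s t : ℝ, 0 ≤ s → 0 ≤ t → T (s + t) = (T s).comp (T t))
    (hTcont : ∀ x : X, ContinuousOn (fun t => T t x) (Ici 0))
    (hM : ∀ t : ℝ, 0 ≤ t → ‖T t‖ ≤ M)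
    (x u v : X)
    (hxu : ∀ r : ℝ, 0 ≤ r → T r x = x - ∫ ρ in (0:ℝ)..r, T ρ u)
    (huv : ∀ r : ℝ, 0 ≤ r → T r u = u - ∫ ρ in (0:ℝ)..r, T ρ v)
    (n : ℕ) (hn : 1 ≤ n) (t : ℝ) (ht : 0 < t) :
    Summable (fun k : ℕ => ‖(((n:ℝ) * t) ^ k / (Nat.factorial k : ℝ)) • T ((k:ℝ) / n) x‖) ∧
    ‖T t x - Real.exp (-((n:ℝ) * t)) •
        ∑' k : ℕ, (((n:ℝ) * t) ^ k / (Nat.factorial k : ℝ)) • T ((k:ℝ) / n) x‖ ≤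
      8 * M * (t / n) * ‖v‖ :=
  statement7_general T M hTcont hM x u v hxu huv n hn t ht
end

section
/- Let (T(t))_{t≥0} be a bounded C₀-semigroup on a complex Banach space X with M := sup_{t≥0}‖T(t)‖. Let x, u, v ∈ X satisfy T(t)x = x − ∫₀^t T(r)u dr and T(t)u = u − ∫₀^t T(r)v dr for all t ≥ 0 (i.e. u = Ax and v = A²x). Then for all n ≥ 1 and t > 0 (Euler approximation): ‖T(t)x − ((n/t)^n/(n−1)!) ∫₀^∞ s^{n−1} e^{−ns/t} T(s)x ds‖ ≤ 8M (t²/n) ‖v‖. -/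
/-!
Write `g(s) = T(s)x`. Since `g' = -T(·)u` and `(T(·)u)' = -T(·)v`, Taylor's formula at `t` gives
`g(s) = g(t) - (s - t) T(t)u + r(s)` with `‖r(s)‖ ≤ M‖v‖(s - t)²`. The Euler operator averages `g`
against the Gamma(n, n/t) density, whose mean is `t` and whose variance is `t²/n`: the mean kills
the linear term, and the variance bounds the average of the remainder by `M‖v‖t²/n`.
-/

open MeasureTheory Set

/-- The density on `(0, ∞)` of the Gamma distribution with shape `m + 1` and rate `b`. -/
noncomputable def gammaDensity (m : ℕ) (b s : ℝ) : ℝ :=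
  b ^ (m + 1) / m.factorial * (s ^ m * Real.exp (-(b * s)))

section GammaMoments

variable {b : ℝ}

lemma gammaDensity_nonneg (m : ℕ) {s : ℝ} (hb : 0 ≤ b) (hs : 0 ≤ s) : 0 ≤ gammaDensity m b s := by
  unfold gammaDensity
  positivity

lemma integrableOn_pow_mul_exp_neg_mul_Ioi (k : ℕ) (hb : 0 < b) :
    IntegrableOn (fun s : ℝ => s ^ k * Real.exp (-(b * s))) (Ioi 0) := by
  refine (integrableOn_rpow_mul_exp_neg_mul_rpow (p := 1) (s := k)
    (neg_one_lt_zero.trans_le k.cast_nonneg) one_pos hb).congr_fun (fun s _ => ?_) measurableSet_Ioi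
  simp only [Real.rpow_one, Real.rpow_natCast, neg_mul]

lemma integral_pow_mul_exp_neg_mul_Ioi (k : ℕ) (hb : 0 < b) :
    ∫ s in Ioi (0 : ℝ), s ^ k * Real.exp (-(b * s)) = k.factorial / b ^ (k + 1) := by
  have h := Real.integral_rpow_mul_exp_neg_mul_Ioi (a := k + 1) (by positivity) hb
  rw [add_sub_cancel_right, Real.Gamma_nat_eq_factorial, ← Nat.cast_succ] at h
  simp only [Real.rpow_natCast, one_div_pow] at h
  rw [h, one_div_mul_eq_div]

lemma gammaDensity_mul_pow (m j : ℕ) (b s : ℝ) :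
    gammaDensity m b s * s ^ j =
      b ^ (m + 1) / m.factorial * (s ^ (m + j) * Real.exp (-(b * s))) := by
  rw [gammaDensity, pow_add]
  ring

lemma integrableOn_gammaDensity_mul_pow (m j : ℕ) (hb : 0 < b) :
    IntegrableOn (fun s => gammaDensity m b s * s ^ j) (Ioi 0) := by
  simp_rw [gammaDensity_mul_pow]
  exact (integrableOn_pow_mul_exp_neg_mul_Ioi (m + j) hb).const_mul _

lemma integrableOn_gammaDensity_mul_sub_pow (m j : ℕ) (a : ℝ) (hb : 0 < b) :
    IntegrableOn (fun s => gammaDensity m b s * (s - a) ^ j) (Ioi 0) := by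
  simp_rw [sub_eq_add_neg, add_pow, Finset.mul_sum, ← mul_assoc]
  exact integrable_finsetSum _ fun i _ =>
    ((integrableOn_gammaDensity_mul_pow m i hb).mul_const _).mul_const _

lemma integrableOn_gammaDensity (m : ℕ) (hb : 0 < b) :
    IntegrableOn (gammaDensity m b) (Ioi 0) := by
  simpa only [pow_zero, mul_one] using integrableOn_gammaDensity_mul_pow m 0 hb

lemma integral_gammaDensity_mul_pow (m j : ℕ) (hb : 0 < b) :
    ∫ s in Ioi (0 : ℝ), gammaDensity m b s * s ^ j =
      (m + j).factorial / (m.factorial * b ^ j) := by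
  simp only [gammaDensity_mul_pow, integral_const_mul, integral_pow_mul_exp_neg_mul_Ioi _ hb]
  field_simp
  ring

lemma integral_gammaDensity (m : ℕ) (hb : 0 < b) :
    ∫ s in Ioi (0 : ℝ), gammaDensity m b s = 1 := by
  simpa [(Nat.factorial_pos m).ne'] using integral_gammaDensity_mul_pow m 0 hb

lemma integral_gammaDensity_mul_sub_mean (m : ℕ) (hb : 0 < b) :
    ∫ s in Ioi (0 : ℝ), gammaDensity m b s * (s - (m + 1) / b) = 0 := by
  have h : ∀ s, gammaDensity m b s * (s - (m + 1) / b) =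
      gammaDensity m b s * s ^ 1 - (m + 1) / b * (gammaDensity m b s * s ^ 0) := fun s => by ring
  simp only [h]
  rw [integral_sub (integrableOn_gammaDensity_mul_pow m 1 hb)
      ((integrableOn_gammaDensity_mul_pow m 0 hb).const_mul _),
    integral_const_mul, integral_gammaDensity_mul_pow m 1 hb, integral_gammaDensity_mul_pow m 0 hb]
  push_cast [add_zero, Nat.factorial_succ]
  field_simp
  ring

lemma integral_gammaDensity_mul_sub_mean_sq (m : ℕ) (hb : 0 < b) :
    ∫ s in Ioi (0 : ℝ), gammaDensity m b s * (s - (m + 1) / b) ^ 2 = (m + 1) / b ^ 2 := by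
  have h : ∀ s, gammaDensity m b s * (s - (m + 1) / b) ^ 2 =
      gammaDensity m b s * s ^ 2 - 2 * (m + 1) / b * (gammaDensity m b s * s ^ 1) +
        ((m + 1) / b) ^ 2 * (gammaDensity m b s * s ^ 0) := fun s => by ring
  have h₂₁ : IntegrableOn (fun s => gammaDensity m b s * s ^ 2 -
      2 * (m + 1) / b * (gammaDensity m b s * s ^ 1)) (Ioi 0) :=
    (integrableOn_gammaDensity_mul_pow m 2 hb).sub
      ((integrableOn_gammaDensity_mul_pow m 1 hb).const_mul _)
  simp only [h]
  rw [integral_add h₂₁ ((integrableOn_gammaDensity_mul_pow m 0 hb).const_mul _),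
    integral_sub (integrableOn_gammaDensity_mul_pow m 2 hb)
      ((integrableOn_gammaDensity_mul_pow m 1 hb).const_mul _),
    integral_const_mul, integral_const_mul, integral_gammaDensity_mul_pow m 2 hb,
    integral_gammaDensity_mul_pow m 1 hb, integral_gammaDensity_mul_pow m 0 hb]
  push_cast [add_zero, Nat.factorial_succ]
  field_simp
  ring

end GammaMoments

section TaylorRemainder

variable {E : Type*} [NormedAddCommGroup E] {g h k : ℝ → E} {c c' : E} {C s t : ℝ}

lemma intervalIntegrable_of_continuousOn_Ici (hh : ContinuousOn h (Ici 0)) (hs : 0 ≤ s)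
    (ht : 0 ≤ t) : IntervalIntegrable h volume t s :=
  (hh.mono fun _ hρ => (le_min ht hs).trans hρ.1).intervalIntegrable

variable [NormedSpace ℝ E]

lemma sub_eq_neg_intervalIntegral (hg : ∀ r, 0 ≤ r → g r = c - ∫ ρ in 0..r, h ρ)
    (hh : ContinuousOn h (Ici 0)) (hs : 0 ≤ s) (ht : 0 ≤ t) :
    g s - g t = -∫ ρ in t..s, h ρ := by
  rw [hg s hs, hg t ht, ← intervalIntegral.integral_add_adjacent_intervals
    (intervalIntegrable_of_continuousOn_Ici hh ht le_rfl)
    (intervalIntegrable_of_continuousOn_Ici hh hs ht)]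
  abel

lemma norm_sub_le_of_eq_sub_intervalIntegral (hg : ∀ r, 0 ≤ r → g r = c - ∫ ρ in 0..r, h ρ)
    (hh : ContinuousOn h (Ici 0)) (hC : ∀ r, 0 ≤ r → ‖h r‖ ≤ C) (hs : 0 ≤ s) (ht : 0 ≤ t) :
    ‖g s - g t‖ ≤ C * |s - t| := by
  rw [sub_eq_neg_intervalIntegral hg hh hs ht, norm_neg]
  exact intervalIntegral.norm_integral_le_of_norm_le_const fun ρ hρ =>
    hC ρ ((le_min ht hs).trans hρ.1.le)

lemma norm_sub_add_smul_le_of_eq_sub_intervalIntegral [CompleteSpace E]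
    (hg : ∀ r, 0 ≤ r → g r = c - ∫ ρ in 0..r, h ρ)
    (hh_eq : ∀ r, 0 ≤ r → h r = c' - ∫ ρ in 0..r, k ρ)
    (hh : ContinuousOn h (Ici 0)) (hk : ContinuousOn k (Ici 0)) (hC : ∀ r, 0 ≤ r → ‖k r‖ ≤ C)
    (hs : 0 ≤ s) (ht : 0 ≤ t) :
    ‖g s - g t + (s - t) • h t‖ ≤ C * (s - t) ^ 2 := by
  have hC₀ : 0 ≤ C := (norm_nonneg _).trans (hC 0 le_rfl)
  have hrepr : g s - g t + (s - t) • h t = -∫ ρ in t..s, (h ρ - h t) := by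
    rw [intervalIntegral.integral_sub (intervalIntegrable_of_continuousOn_Ici hh hs ht)
      intervalIntegrable_const, intervalIntegral.integral_const,
      sub_eq_neg_intervalIntegral hg hh hs ht]
    abel
  have hbound : ∀ ρ ∈ uIoc t s, ‖h ρ - h t‖ ≤ C * |s - t| := fun ρ hρ =>
    (norm_sub_le_of_eq_sub_intervalIntegral hh_eq hk hC ((le_min ht hs).trans hρ.1.le) ht).trans
      (mul_le_mul_of_nonneg_left (abs_sub_left_of_mem_uIcc (uIoc_subset_uIcc hρ)) hC₀)
  calc ‖g s - g t + (s - t) • h t‖ = ‖∫ ρ in t..s, (h ρ - h t)‖ := by rw [hrepr, norm_neg]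
    _ ≤ C * |s - t| * |s - t| := intervalIntegral.norm_integral_le_of_norm_le_const hbound
    _ = C * (s - t) ^ 2 := by rw [mul_assoc, abs_mul_abs_self, sq]

end TaylorRemainder

theorem norm_sub_integral_smul_le_of_sq_remainder {E : Type*} [NormedAddCommGroup E]
    [NormedSpace ℝ E] [CompleteSpace E] {μ : Measure ℝ} {f : ℝ → ℝ} {g : ℝ → E} {t K : ℝ} (d : E)
    (hf : Integrable f μ) (hf₁ : Integrable (fun s => f s * (s - t)) μ)
    (hf₂ : Integrable (fun s => f s * (s - t) ^ 2) μ) (hfg : Integrable (fun s => f s • g s) μ)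
    (hf₀ : ∀ᵐ s ∂μ, 0 ≤ f s) (hmass : ∫ s, f s ∂μ = 1) (hmean : ∫ s, f s * (s - t) ∂μ = 0)
    (hrem : ∀ᵐ s ∂μ, ‖g s - g t + (s - t) • d‖ ≤ K * (s - t) ^ 2) :
    ‖g t - ∫ s, f s • g s ∂μ‖ ≤ K * ∫ s, f s * (s - t) ^ 2 ∂μ := by
  set r : ℝ → E := fun s => g s - g t + (s - t) • d
  have hsplit : ∀ s, f s • r s = f s • g s - f s • g t + (f s * (s - t)) • d := fun s => by
    simp only [r, smul_add, smul_sub, mul_smul]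
  have hfg' : Integrable (fun s => f s • g s - f s • g t) μ := hfg.sub (hf.smul_const _)
  have hrepr : g t - ∫ s, f s • g s ∂μ = -∫ s, f s • r s ∂μ := by
    simp only [hsplit]
    rw [integral_add hfg' (hf₁.smul_const _),
      integral_sub hfg (hf.smul_const _), integral_smul_const, integral_smul_const, hmass, hmean]
    simp
  rw [hrepr, norm_neg, ← integral_const_mul]
  refine norm_integral_le_of_norm_le (hf₂.const_mul K) ?_
  filter_upwards [hf₀, hrem] with s hs₀ hs
  rw [norm_smul, Real.norm_of_nonneg hs₀]
  nlinarith [norm_nonneg (r s)]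

theorem norm_sub_integral_gammaDensity_smul_le {E : Type*} [NormedAddCommGroup E]
    [NormedSpace ℝ E] [CompleteSpace E] {g : ℝ → E} {d : E} {B K t : ℝ} (m : ℕ) (ht : 0 < t)
    (hg : ContinuousOn g (Ici 0)) (hB : ∀ s, 0 ≤ s → ‖g s‖ ≤ B)
    (hrem : ∀ s, 0 ≤ s → ‖g s - g t + (s - t) • d‖ ≤ K * (s - t) ^ 2) :
    ‖g t - ∫ s in Ioi (0 : ℝ), gammaDensity m ((m + 1) / t) s • g s‖ ≤ K * (t ^ 2 / (m + 1)) := by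
  have hb : 0 < ((m : ℝ) + 1) / t := by positivity
  have hmean : ((m : ℝ) + 1) / ((m + 1) / t) = t := by field_simp
  have hmoment := integral_gammaDensity_mul_sub_mean m hb
  have hvar := integral_gammaDensity_mul_sub_mean_sq m hb
  rw [hmean] at hmoment hvar
  have hfg : IntegrableOn (fun s => gammaDensity m ((m + 1) / t) s • g s) (Ioi 0) :=
    (integrableOn_gammaDensity m hb).smul_bdd B
      ((hg.mono Ioi_subset_Ici_self).aestronglyMeasurable measurableSet_Ioi)
      (ae_restrict_of_forall_mem measurableSet_Ioi fun s hs => hB s (le_of_lt hs))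
  calc _ ≤ K * ∫ s in Ioi (0 : ℝ), gammaDensity m ((m + 1) / t) s * (s - t) ^ 2 :=
        norm_sub_integral_smul_le_of_sq_remainder d (integrableOn_gammaDensity m hb)
          (by simpa only [pow_one, IntegrableOn] using
            integrableOn_gammaDensity_mul_sub_pow m 1 t hb)
          (integrableOn_gammaDensity_mul_sub_pow m 2 t hb) hfg
          (ae_restrict_of_forall_mem measurableSet_Ioi fun s hs =>
            gammaDensity_nonneg m hb.le (le_of_lt hs))
          (integral_gammaDensity m hb) hmoment
          (ae_restrict_of_forall_mem measurableSet_Ioi fun s hs => hrem s (le_of_lt hs))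
    _ = K * (t ^ 2 / (m + 1)) := by rw [hvar]; field_simp

lemma smul_integral_eq_integral_gammaDensity_smul {E : Type*} [NormedAddCommGroup E]
    [NormedSpace ℝ E] (g : ℝ → E) {n : ℕ} (hn : 1 ≤ n) (t : ℝ) :
    (((n : ℝ) / t) ^ n / (n - 1).factorial) •
        ∫ s in Ioi (0 : ℝ), (s ^ (n - 1) * Real.exp (-((n : ℝ) * s) / t)) • g s =
      ∫ s in Ioi (0 : ℝ), gammaDensity (n - 1) (n / t) s • g s := by
  rw [← integral_smul]
  refine integral_congr_ae (ae_of_all _ fun s => ?_)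
  simp only [smul_smul, gammaDensity, Nat.sub_add_cancel hn]
  congr 4
  ring

theorem statement8_general {X : Type*} [NormedAddCommGroup X] [NormedSpace ℂ X] [CompleteSpace X]
    (T : ℝ → X →L[ℂ] X) (M : ℝ)
    (hTcont : ∀ x : X, ContinuousOn (fun t => T t x) (Ici 0))
    (hM : ∀ t : ℝ, 0 ≤ t → ‖T t‖ ≤ M)
    (x u v : X)
    (hxu : ∀ r : ℝ, 0 ≤ r → T r x = x - ∫ ρ in (0:ℝ)..r, T ρ u)
    (huv : ∀ r : ℝ, 0 ≤ r → T r u = u - ∫ ρ in (0:ℝ)..r, T ρ v)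
    (n : ℕ) (hn : 1 ≤ n) (t : ℝ) (ht : 0 < t) :
    ‖T t x - (((n:ℝ) / t) ^ n / (Nat.factorial (n - 1) : ℝ)) •
        ∫ s in Ioi (0:ℝ), (s ^ (n - 1) * Real.exp (-((n:ℝ) * s) / t)) • T s x‖ ≤
      8 * M * (t ^ 2 / n) * ‖v‖ := by
  have hT : ∀ y s, 0 ≤ s → ‖T s y‖ ≤ M * ‖y‖ := fun y s hs => (T s).le_of_opNorm_le (hM s hs) y
  have hrem (s : ℝ) (hs : 0 ≤ s) : ‖T s x - T t x + (s - t) • T t u‖ ≤ M * ‖v‖ * (s - t) ^ 2 :=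
    norm_sub_add_smul_le_of_eq_sub_intervalIntegral hxu huv (hTcont u) (hTcont v)
      (fun r hr => hT v r hr) hs ht.le
  obtain ⟨m, rfl⟩ : ∃ m, n = m + 1 := ⟨n - 1, by omega⟩
  rw [smul_integral_eq_integral_gammaDensity_smul _ hn, Nat.add_sub_cancel, Nat.cast_succ]
  have hM₀ : 0 ≤ M := (norm_nonneg _).trans (hM 0 le_rfl)
  calc _ ≤ M * ‖v‖ * (t ^ 2 / (m + 1)) :=
        norm_sub_integral_gammaDensity_smul_le m ht (hTcont x) (fun s hs => hT x s hs) hrem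
    _ ≤ 8 * M * (t ^ 2 / (m + 1)) * ‖v‖ := by
        have : 0 ≤ M * ‖v‖ * (t ^ 2 / (m + 1)) := by positivity
        linarith

/-- Rate in Euler's approximation on `dom(A²)`: for a bounded `C₀`-semigroup `T` with
`sup ‖T(t)‖ ≤ M` and `x ∈ dom(A²)` (witnessed by `u = Ax`, `v = A²x`),
`‖T(t)x - ((n/t)^n/(n-1)!) ∫₀^∞ s^(n-1) e^(-ns/t) T(s)x ds‖ ≤ 8M(t²/n)‖v‖`. -/
theorem statement8 {X : Type*} [NormedAddCommGroup X] [NormedSpace ℂ X] [CompleteSpace X]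
    (T : ℝ → X →L[ℂ] X) (M : ℝ)
    (hT0 : T 0 = 1)
    (hTadd : ∀ s t : ℝ, 0 ≤ s → 0 ≤ t → T (s + t) = (T s).comp (T t))
    (hTcont : ∀ x : X, ContinuousOn (fun t => T t x) (Ici 0))
    (hM : ∀ t : ℝ, 0 ≤ t → ‖T t‖ ≤ M)
    (x u v : X)
    (hxu : ∀ r : ℝ, 0 ≤ r → T r x = x - ∫ ρ in (0:ℝ)..r, T ρ u)
    (huv : ∀ r : ℝ, 0 ≤ r → T r u = u - ∫ ρ in (0:ℝ)..r, T ρ v)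
    (n : ℕ) (hn : 1 ≤ n) (t : ℝ) (ht : 0 < t) :
    ‖T t x - (((n:ℝ) / t) ^ n / (Nat.factorial (n - 1) : ℝ)) •
        ∫ s in Ioi (0:ℝ), (s ^ (n - 1) * Real.exp (-((n:ℝ) * s) / t)) • T s x‖ ≤
      8 * M * (t ^ 2 / n) * ‖v‖ :=
  statement8_general T M hTcont hM x u v hxu huv n hn t ht
end

section
/- Let p be a nonconstant Bernstein function, i.e. p(z) = a₀ + b₀z + ∫₀^∞ (1 − e^{−zs}) dμ(s) for z ≥ 0, with a₀, b₀ ≥ 0 and μ a positive measure on (0,∞) with ∫ s/(1+s) dμ(s) < ∞, and with b₀ > 0 or μ ≠ 0. Let q : (0,∞) → ℂ be measurable, integrable on (0,∞), and essentially bounded on [0,a] for every a > 0. Then for every a > 0 and every t > 0: ∫₀^∞ e^{−tp(s)}|q(s)| ds ≤ t^{−1} [ ‖q‖_{L^∞[0,a]} / p′(a) + (∫_a^∞ |q(s)| ds) / p(a) ], where p′(a) = b₀ + ∫₀^∞ s e^{−as} dμ(s). -/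
open MeasureTheory Set Complex

/-!
Split `(0, ∞)` at `a`. On `(0, a]` we have `p s ≥ p′(a) s`, because `x e^{-x} ≤ 1 - e^{-x}` and
`e^{-ar} ≤ e^{-sr}`; hence `e^{-t p(s)} ≤ e^{-t p′(a) s}`, whose integral over `(0, ∞)` is
`1 / (t p′(a))`. On `(a, ∞)` monotonicity of `p` gives `e^{-t p(s)} ≤ e^{-t p(a)} ≤ 1 / (t p(a))`.
-/

section LaplaceBound

variable {E : Type*} [NormedAddCommGroup E] {P : ℝ → ℝ} {q : ℝ → E} {a d t Q : ℝ}

lemma Real.exp_neg_le_inv {x : ℝ} (hx : 0 < x) : Real.exp (-x) ≤ x⁻¹ := by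
  rw [Real.exp_neg]
  exact inv_anti₀ hx (by linarith [Real.add_one_le_exp x])

lemma integral_Ioi_exp_neg_mul {c : ℝ} (hc : 0 < c) :
    ∫ s in Ioi (0 : ℝ), Real.exp (-c * s) = c⁻¹ := by
  simpa using integral_exp_mul_Ioi (neg_neg_of_pos hc) 0

lemma MonotoneOn.pos_of_mul_le (ha : 0 < a) (hd : 0 < d) (hP : MonotoneOn P (Ioi 0))
    (hlin : ∀ s ∈ Ioc 0 a, d * s ≤ P s) {s : ℝ} (hs : 0 < s) : 0 < P s := by
  rcases le_or_gt s a with hsa | has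
  · exact (mul_pos hd hs).trans_le (hlin s ⟨hs, hsa⟩)
  · calc 0 < d * a := mul_pos hd ha
      _ ≤ P a := hlin a ⟨ha, le_rfl⟩
      _ ≤ P s := hP ha (ha.trans has) has.le

lemma integrableOn_exp_neg_mul_mul_norm (ht : 0 ≤ t) (hP : MonotoneOn P (Ioi 0))
    (hP0 : ∀ s ∈ Ioi 0, 0 ≤ P s) (hq : IntegrableOn q (Ioi 0)) :
    IntegrableOn (fun s => Real.exp (-t * P s) * ‖q s‖) (Ioi 0) := by
  have hmeas : AEMeasurable (fun s => Real.exp (-t * P s)) (volume.restrict (Ioi 0)) :=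
    Real.measurable_exp.comp_aemeasurable
      ((aemeasurable_restrict_of_monotoneOn measurableSet_Ioi hP).const_mul (-t))
  refine hq.norm.mono' (hmeas.aestronglyMeasurable.mul hq.norm.aestronglyMeasurable) ?_
  filter_upwards [ae_restrict_mem measurableSet_Ioi] with s hs
  rw [norm_mul, Real.norm_of_nonneg (Real.exp_pos _).le, norm_norm]
  exact mul_le_of_le_one_left (norm_nonneg _)
    (Real.exp_le_one_iff.mpr (by nlinarith [hP0 s hs]))

lemma setIntegral_Ioc_exp_neg_mul_mul_norm_le (ht : 0 < t) (hd : 0 < d)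
    (hlin : ∀ s ∈ Ioc 0 a, d * s ≤ P s) (hQ0 : 0 ≤ Q)
    (hQ : ∀ᵐ s ∂volume.restrict (Ioc 0 a), ‖q s‖ ≤ Q)
    (hint : IntegrableOn (fun s => Real.exp (-t * P s) * ‖q s‖) (Ioc 0 a)) :
    ∫ s in Ioc 0 a, Real.exp (-t * P s) * ‖q s‖ ≤ Q / (t * d) := by
  have htd : 0 < t * d := mul_pos ht hd
  have hexp : IntegrableOn (fun s => Q * Real.exp (-(t * d) * s)) (Ioi 0) :=
    (exp_neg_integrableOn_Ioi 0 htd).const_mul Q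
  calc ∫ s in Ioc 0 a, Real.exp (-t * P s) * ‖q s‖
      ≤ ∫ s in Ioc 0 a, Q * Real.exp (-(t * d) * s) := by
        refine setIntegral_mono_ae_restrict hint (hexp.mono_set Ioc_subset_Ioi_self) ?_
        filter_upwards [hQ, ae_restrict_mem measurableSet_Ioc] with s hqs hs
        rw [mul_comm Q]
        refine mul_le_mul (Real.exp_le_exp.mpr ?_) hqs (norm_nonneg _) (Real.exp_pos _).le
        nlinarith [mul_le_mul_of_nonneg_left (hlin s hs) ht.le]
    _ ≤ ∫ s in Ioi 0, Q * Real.exp (-(t * d) * s) :=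
        setIntegral_mono_set hexp (.of_forall fun s => by positivity)
          Ioc_subset_Ioi_self.eventuallyLE
    _ = Q / (t * d) := by rw [integral_const_mul, integral_Ioi_exp_neg_mul htd, div_eq_mul_inv]

lemma setIntegral_Ioi_exp_neg_mul_mul_norm_le (ht : 0 < t) (hPa : 0 < P a)
    (hP : ∀ s ∈ Ioi a, P a ≤ P s) (hq : IntegrableOn q (Ioi a))
    (hint : IntegrableOn (fun s => Real.exp (-t * P s) * ‖q s‖) (Ioi a)) :
    ∫ s in Ioi a, Real.exp (-t * P s) * ‖q s‖ ≤ (∫ s in Ioi a, ‖q s‖) / (t * P a) := by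
  have htP : 0 < t * P a := mul_pos ht hPa
  calc ∫ s in Ioi a, Real.exp (-t * P s) * ‖q s‖
      ≤ ∫ s in Ioi a, Real.exp (-(t * P a)) * ‖q s‖ := by
        refine setIntegral_mono_on hint (hq.norm.const_mul (Real.exp (-(t * P a))))
          measurableSet_Ioi fun s hs => ?_
        gcongr
        nlinarith [hP s hs]
    _ = Real.exp (-(t * P a)) * ∫ s in Ioi a, ‖q s‖ := integral_const_mul _ _
    _ ≤ (t * P a)⁻¹ * ∫ s in Ioi a, ‖q s‖ := by
        gcongr
        exact Real.exp_neg_le_inv htP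
    _ = (∫ s in Ioi a, ‖q s‖) / (t * P a) := by rw [mul_comm, div_eq_mul_inv]

theorem setIntegral_exp_neg_mul_mul_norm_le (ha : 0 < a) (ht : 0 < t) (hd : 0 < d)
    (hP : MonotoneOn P (Ioi 0)) (hlin : ∀ s ∈ Ioc 0 a, d * s ≤ P s)
    (hq : IntegrableOn q (Ioi 0)) (hQ : ∀ᵐ s ∂volume.restrict (Ioc 0 a), ‖q s‖ ≤ Q) :
    ∫ s in Ioi 0, Real.exp (-t * P s) * ‖q s‖ ≤ t⁻¹ * (Q / d + (∫ s in Ioi a, ‖q s‖) / P a) := by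
  have hpos : ∀ s ∈ Ioi 0, 0 < P s := fun s hs => hP.pos_of_mul_le ha hd hlin hs
  have hint := integrableOn_exp_neg_mul_mul_norm ht.le hP (fun s hs => (hpos s hs).le) hq
  have hQ0 : 0 ≤ Q := by
    have : (ae (volume.restrict (Ioc 0 a))).NeBot := ae_neBot.mpr (by simp [ha])
    obtain ⟨s, hs⟩ := hQ.exists
    exact (norm_nonneg _).trans hs
  rw [← Ioc_union_Ioi_eq_Ioi ha.le, setIntegral_union (Ioc_disjoint_Ioi le_rfl) measurableSet_Ioi
    (hint.mono_set Ioc_subset_Ioi_self) (hint.mono_set (Ioi_subset_Ioi ha.le))]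
  calc _ ≤ Q / (t * d) + (∫ s in Ioi a, ‖q s‖) / (t * P a) :=
        add_le_add (setIntegral_Ioc_exp_neg_mul_mul_norm_le ht hd hlin hQ0 hQ
            (hint.mono_set Ioc_subset_Ioi_self))
          (setIntegral_Ioi_exp_neg_mul_mul_norm_le ht (hpos a ha)
            (fun s hs => hP ha (ha.trans hs) hs.le) (hq.mono_set (Ioi_subset_Ioi ha.le))
            (hint.mono_set (Ioi_subset_Ioi ha.le)))
    _ = _ := by ring

end LaplaceBound

section Bernstein

variable {μ : Measure ℝ} {a₀ b₀ a s : ℝ}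

noncomputable def bernsteinFunction (a₀ b₀ : ℝ) (μ : Measure ℝ) (s : ℝ) : ℝ :=
  a₀ + b₀ * s + ∫ r in Ioi 0, (1 - Real.exp (-s * r)) ∂μ

/-- `p′(a)`, by differentiating `bernsteinFunction` under the integral sign. -/
noncomputable def bernsteinFunctionDeriv (b₀ : ℝ) (μ : Measure ℝ) (a : ℝ) : ℝ :=
  b₀ + ∫ r in Ioi 0, r * Real.exp (-a * r) ∂μ

lemma Real.mul_exp_neg_le_one_sub_exp_neg (x : ℝ) : x * Real.exp (-x) ≤ 1 - Real.exp (-x) := by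
  calc x * Real.exp (-x) = (x + 1) * Real.exp (-x) - Real.exp (-x) := by ring
    _ ≤ Real.exp x * Real.exp (-x) - Real.exp (-x) := by gcongr; exact Real.add_one_le_exp x
    _ = 1 - Real.exp (-x) := by rw [← Real.exp_add, add_neg_cancel, Real.exp_zero]

lemma integrableOn_one_sub_exp_neg_mul
    (hμ : IntegrableOn (fun r : ℝ => r / (1 + r)) (Ioi 0) μ) (hs : 0 ≤ s) :
    IntegrableOn (fun r : ℝ => 1 - Real.exp (-s * r)) (Ioi 0) μ := by
  -- `1 - e^{-sr} ≤ min 1 (s r)` while `r / (1 + r) ≥ min 1 r / 2`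
  refine (hμ.const_mul (2 * max s 1)).mono (by fun_prop : Continuous _).aestronglyMeasurable ?_
  filter_upwards [ae_restrict_mem measurableSet_Ioi] with r (hr : 0 < r)
  have hle : Real.exp (-s * r) ≤ 1 := Real.exp_le_one_iff.mpr (by nlinarith)
  have hlin : 1 - s * r ≤ Real.exp (-s * r) := by linarith [Real.add_one_le_exp (-s * r)]
  have hs1 : s ≤ max s 1 := le_max_left _ _
  have h1 : (1 : ℝ) ≤ max s 1 := le_max_right _ _
  rw [Real.norm_of_nonneg (by linarith), Real.norm_of_nonneg (by positivity), mul_div_assoc',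
    le_div_iff₀ (by linarith)]
  rcases le_total r 1 with h | h <;> nlinarith [Real.exp_pos (-s * r)]

lemma integrableOn_mul_exp_neg_mul
    (hμ : IntegrableOn (fun r : ℝ => r / (1 + r)) (Ioi 0) μ) (ha : 0 < a) :
    IntegrableOn (fun r : ℝ => r * Real.exp (-a * r)) (Ioi 0) μ := by
  refine (hμ.const_mul (min a 1)⁻¹).mono (by fun_prop : Continuous _).aestronglyMeasurable ?_
  filter_upwards [ae_restrict_mem measurableSet_Ioi] with r (hr : 0 < r)
  have hm : 0 < min a 1 := lt_min ha one_pos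
  have hma : min a 1 ≤ a := min_le_left a 1
  have hm1 : min a 1 ≤ 1 := min_le_right a 1
  rw [Real.norm_of_nonneg (by positivity), Real.norm_of_nonneg (by positivity)]
  calc r * Real.exp (-a * r) ≤ r * (1 + a * r)⁻¹ := by
        rw [neg_mul, Real.exp_neg]
        gcongr
        exact Real.add_one_le_exp (a * r) |>.trans_eq' (add_comm _ _)
    _ ≤ r * (min a 1 * (1 + r))⁻¹ := by gcongr; nlinarith
    _ = (min a 1)⁻¹ * (r / (1 + r)) := by rw [mul_inv]; ring

lemma bernsteinFunction_monotoneOn (hb₀ : 0 ≤ b₀)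
    (hμ : IntegrableOn (fun r : ℝ => r / (1 + r)) (Ioi 0) μ) :
    MonotoneOn (bernsteinFunction a₀ b₀ μ) (Ici 0) := by
  intro s₁ (hs₁ : 0 ≤ s₁) s₂ (hs₂ : 0 ≤ s₂) h
  have hint : ∫ r in Ioi 0, (1 - Real.exp (-s₁ * r)) ∂μ ≤ ∫ r in Ioi 0, (1 - Real.exp (-s₂ * r)) ∂μ :=
    setIntegral_mono_on (integrableOn_one_sub_exp_neg_mul hμ hs₁)
      (integrableOn_one_sub_exp_neg_mul hμ hs₂) measurableSet_Ioi fun r (hr : 0 < r) => by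
        gcongr
  unfold bernsteinFunction
  nlinarith

lemma bernsteinFunctionDeriv_mul_le (ha₀ : 0 ≤ a₀)
    (hμ : IntegrableOn (fun r : ℝ => r / (1 + r)) (Ioi 0) μ) (ha : 0 < a) (hs : 0 ≤ s)
    (hsa : s ≤ a) :
    bernsteinFunctionDeriv b₀ μ a * s ≤ bernsteinFunction a₀ b₀ μ s := by
  have hint : ∫ r in Ioi 0, r * Real.exp (-a * r) * s ∂μ ≤
      ∫ r in Ioi 0, (1 - Real.exp (-s * r)) ∂μ := by
    refine setIntegral_mono_on ((integrableOn_mul_exp_neg_mul hμ ha).mul_const s)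
      (integrableOn_one_sub_exp_neg_mul hμ hs) measurableSet_Ioi fun r (hr : 0 < r) => ?_
    calc r * Real.exp (-a * r) * s ≤ s * r * Real.exp (-(s * r)) := by
          rw [mul_right_comm, mul_comm r s]
          gcongr
          nlinarith
      _ ≤ 1 - Real.exp (-(s * r)) := Real.mul_exp_neg_le_one_sub_exp_neg _
      _ = 1 - Real.exp (-s * r) := by rw [neg_mul]
  unfold bernsteinFunction bernsteinFunctionDeriv
  rw [add_mul, ← integral_mul_const]
  linarith

lemma bernsteinFunctionDeriv_pos (hb₀ : 0 ≤ b₀)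
    (hμ : IntegrableOn (fun r : ℝ => r / (1 + r)) (Ioi 0) μ)
    (hnc : 0 < b₀ ∨ μ.restrict (Ioi 0) ≠ 0) (ha : 0 < a) :
    0 < bernsteinFunctionDeriv b₀ μ a := by
  have hnonneg : 0 ≤ᵐ[μ.restrict (Ioi 0)] fun r => r * Real.exp (-a * r) := by
    filter_upwards [ae_restrict_mem measurableSet_Ioi] with r (hr : 0 < r)
    positivity
  unfold bernsteinFunctionDeriv
  rcases hnc with hb | hμ0
  · linarith [setIntegral_nonneg_of_ae_restrict hnonneg]
  · have : 0 < ∫ r in Ioi 0, r * Real.exp (-a * r) ∂μ := by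
      rw [setIntegral_pos_iff_support_of_nonneg_ae hnonneg (integrableOn_mul_exp_neg_mul hμ ha)]
      refine (pos_iff_ne_zero.mpr fun h => hμ0 (Measure.restrict_eq_zero.mpr h)).trans_le
        (measure_mono fun r (hr : 0 < r) => ⟨(by positivity : r * Real.exp (-a * r) ≠ 0), hr⟩)
    linarith

end Bernstein

theorem statement10_general (a₀ b₀ : ℝ) (ha₀ : 0 ≤ a₀) (hb₀ : 0 ≤ b₀)
    (μ : Measure ℝ)
    (hμ : IntegrableOn (fun s : ℝ => s / (1 + s)) (Ioi 0) μ)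
    (hnc : 0 < b₀ ∨ μ.restrict (Ioi 0) ≠ 0)
    (q : ℝ → ℂ) (hqi : IntegrableOn q (Ioi 0))
    (a t : ℝ) (ha : 0 < a) (ht : 0 < t)
    (Qa : ℝ) (hQa : ∀ᵐ s ∂(volume.restrict (Icc (0:ℝ) a)), ‖q s‖ ≤ Qa) :
    (∫ s in Ioi (0:ℝ),
        Real.exp (-t * (a₀ + b₀ * s + ∫ r in Ioi (0:ℝ), (1 - Real.exp (-s * r)) ∂μ)) * ‖q s‖) ≤
      t⁻¹ * (Qa / (b₀ + ∫ r in Ioi (0:ℝ), r * Real.exp (-a * r) ∂μ) +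
        (∫ s in Ioi a, ‖q s‖) /
          (a₀ + b₀ * a + ∫ r in Ioi (0:ℝ), (1 - Real.exp (-a * r)) ∂μ)) :=
  setIntegral_exp_neg_mul_mul_norm_le (P := bernsteinFunction a₀ b₀ μ) ha ht
    (bernsteinFunctionDeriv_pos hb₀ hμ hnc ha)
    ((bernsteinFunction_monotoneOn hb₀ hμ).mono Ioi_subset_Ici_self)
    (fun _ hs => bernsteinFunctionDeriv_mul_le ha₀ hμ ha hs.1.le hs.2) hqi
    (ae_restrict_of_ae_restrict_of_subset Ioc_subset_Icc_self hQa)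

/-- Lemma 6.6: if `p` is a nonconstant Bernstein function (Lévy data `(a₀, b₀, μ)`) and
`q` is integrable on `(0,∞)` and essentially bounded on `[0,a]` (with bound `Qa`), then
for all `a, t > 0`,
`∫₀^∞ e^(-tp(s))|q(s)| ds ≤ t⁻¹ [Qa/p′(a) + (∫_a^∞ |q|)/p(a)]`. -/
theorem statement10 (a₀ b₀ : ℝ) (ha₀ : 0 ≤ a₀) (hb₀ : 0 ≤ b₀)
    (μ : Measure ℝ)
    (hμ : IntegrableOn (fun s : ℝ => s / (1 + s)) (Ioi 0) μ)
    (hnc : 0 < b₀ ∨ μ.restrict (Ioi 0) ≠ 0)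
    (q : ℝ → ℂ) (hqm : Measurable q) (hqi : IntegrableOn q (Ioi 0))
    (a t : ℝ) (ha : 0 < a) (ht : 0 < t)
    (Qa : ℝ) (hQa : ∀ᵐ s ∂(volume.restrict (Icc (0:ℝ) a)), ‖q s‖ ≤ Qa) :
    (∫ s in Ioi (0:ℝ),
        Real.exp (-t * (a₀ + b₀ * s + ∫ r in Ioi (0:ℝ), (1 - Real.exp (-s * r)) ∂μ)) * ‖q s‖) ≤
      t⁻¹ * (Qa / (b₀ + ∫ r in Ioi (0:ℝ), r * Real.exp (-a * r) ∂μ) +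
        (∫ s in Ioi a, ‖q s‖) /
          (a₀ + b₀ * a + ∫ r in Ioi (0:ℝ), (1 - Real.exp (-a * r)) ∂μ)) :=
  statement10_general a₀ b₀ ha₀ hb₀ μ hμ hnc q hqi a t ha ht Qa hQa
end

section
/- Let (T(t))_{t≥0} be a bounded C₀-semigroup on a complex Banach space X with sup_{t≥0}‖T(t)‖ ≤ M₀. Let B and C be nonzero bounded linear operators on X such that T(t)(Cx) = Cx − ∫₀^t T(r)(Bx) dr for all x ∈ X and t ≥ 0 (i.e. C = A^{−1}B where −A is the generator), and set a := ‖B‖ > 0, b := ‖C‖ > 0. Let f be a Stieltjes function, f(z) = c₀/z + c₁ + ∫₀^∞ (z+τ)^{−1} dρ(τ) with c₀, c₁ ≥ 0 and ρ a positive measure on (0,∞) with ∫₀^∞ (1+τ)^{−1} dρ(τ) < ∞. Then for every x ∈ X: ‖c₀·Cx + c₁·Bx + ∫₀^∞ (∫₀^∞ e^{−τs} T(s)(Bx) ds) dρ(τ)‖ ≤ 2(1+M₀) a f(a/b) ‖x‖. -/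
/-!
For `τ > 0` the inner integral is the resolvent `(τ + A)⁻¹ B x`, the Laplace transform of
`u(s) = T(s) B x`. It obeys two bounds. Directly, `‖u‖ ≤ M₀ a ‖x‖` gives `M₀ a ‖x‖ / τ`.
Integrating by parts against the primitive `∫₀^t u = C x - T(t) C x`, which is bounded by
`(1 + M₀) b ‖x‖`, turns the Laplace transform of `u` into `τ` times that of its primitive,
whence the bound `(1 + M₀) b ‖x‖`. A number `y` with `y z ≤ N` and `y τ ≤ N` satisfies
`y ≤ 2 N / (z + τ)`; with `z = a / b` and `N = (1 + M₀) a ‖x‖` this is the Stieltjes kernel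
`(a / b + τ)⁻¹`, which is then integrated against `ρ`.
-/

open MeasureTheory Set Topology Filter

section Laplace

variable {E : Type*} [NormedAddCommGroup E] [NormedSpace ℝ E] {u : ℝ → E} {L τ : ℝ}

theorem integral_exp_neg_mul_Ioi_zero (hτ : 0 < τ) :
    ∫ s in Ioi (0 : ℝ), Real.exp (-τ * s) = τ⁻¹ := by
  rw [integral_exp_mul_Ioi (neg_neg_of_pos hτ), mul_zero, Real.exp_zero, neg_div, div_neg, neg_neg,
    one_div]

theorem ae_norm_exp_neg_mul_smul_le (hL : ∀ s > 0, ‖u s‖ ≤ L) :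
    ∀ᵐ s ∂volume.restrict (Ioi (0 : ℝ)), ‖Real.exp (-τ * s) • u s‖ ≤ L * Real.exp (-τ * s) := by
  refine (ae_restrict_iff' measurableSet_Ioi).2 (.of_forall fun s hs => ?_)
  rw [norm_smul, Real.norm_of_nonneg (Real.exp_pos _).le, mul_comm]
  exact mul_le_mul_of_nonneg_right (hL s hs) (Real.exp_pos _).le

theorem integrableOn_exp_neg_mul_smul (hu : AEStronglyMeasurable u (volume.restrict (Ioi 0)))
    (hL : ∀ s > 0, ‖u s‖ ≤ L) (hτ : 0 < τ) :
    IntegrableOn (fun s => Real.exp (-τ * s) • u s) (Ioi 0) :=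
  ((exp_neg_integrableOn_Ioi 0 hτ).const_mul L).mono'
    ((Real.continuous_exp.comp (continuous_const.mul continuous_id)).aestronglyMeasurable.smul hu)
    (ae_norm_exp_neg_mul_smul_le hL)

theorem norm_integral_exp_neg_mul_smul_le (hL : ∀ s > 0, ‖u s‖ ≤ L) (hτ : 0 < τ) :
    ‖∫ s in Ioi (0 : ℝ), Real.exp (-τ * s) • u s‖ ≤ L / τ := by
  calc ‖∫ s in Ioi (0 : ℝ), Real.exp (-τ * s) • u s‖
      ≤ ∫ s in Ioi (0 : ℝ), L * Real.exp (-τ * s) :=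
        norm_integral_le_of_norm_le ((exp_neg_integrableOn_Ioi 0 hτ).const_mul L)
          (ae_norm_exp_neg_mul_smul_le hL)
    _ = L / τ := by rw [integral_const_mul, integral_exp_neg_mul_Ioi_zero hτ, div_eq_mul_inv]

theorem continuousWithinAt_primitive_zero [CompleteSpace E] (hu : ContinuousOn u (Ici 0)) :
    ContinuousWithinAt (fun t => ∫ r in (0 : ℝ)..t, u r) (Ici 0) 0 := by
  have hint : IntervalIntegrable u volume (min 0 0) (max 0 1) := by
    rw [min_self, max_eq_right zero_le_one]
    exact (hu.mono Icc_subset_Ici_self).intervalIntegrable_of_Icc zero_le_one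
  exact (intervalIntegral.continuousWithinAt_primitive (Real.volume_singleton) hint)
    |>.mono_of_mem_nhdsWithin (Icc_mem_nhdsGE zero_lt_one)

theorem hasDerivAt_primitive_of_pos [CompleteSpace E] (hu : ContinuousOn u (Ici 0)) {s : ℝ}
    (hs : 0 < s) : HasDerivAt (fun t => ∫ r in (0 : ℝ)..t, u r) (u s) s := by
  have hu' : ContinuousOn u (Ioi 0) := hu.mono Ioi_subset_Ici_self
  refine intervalIntegral.integral_hasDerivAt_right ?_
    (hu'.stronglyMeasurableAtFilter isOpen_Ioi s hs) (hu'.continuousAt (Ioi_mem_nhds hs))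
  exact (hu.mono Icc_subset_Ici_self).intervalIntegrable_of_Icc hs.le

theorem integral_exp_neg_mul_smul_eq_smul_integral_primitive [CompleteSpace E] {K : ℝ}
    (hu : ContinuousOn u (Ici 0)) (hL : ∀ s > 0, ‖u s‖ ≤ L)
    (hK : ∀ t > 0, ‖∫ r in (0 : ℝ)..t, u r‖ ≤ K) (hτ : 0 < τ) :
    ∫ s in Ioi (0 : ℝ), Real.exp (-τ * s) • u s =
      τ • ∫ s in Ioi (0 : ℝ), Real.exp (-τ * s) • ∫ r in (0 : ℝ)..s, u r := by
  set F : ℝ → E := fun t => ∫ r in (0 : ℝ)..t, u r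
  have hexp (s : ℝ) : HasDerivAt (fun t => Real.exp (-τ * t)) (-τ * Real.exp (-τ * s)) s := by
    simpa [mul_comm] using ((hasDerivAt_id s).const_mul (-τ)).exp
  have hF_cont : ContinuousOn F (Ioi 0) := fun s hs =>
    (hasDerivAt_primitive_of_pos hu hs).continuousAt.continuousWithinAt
  have hu_int := integrableOn_exp_neg_mul_smul
    ((hu.mono Ioi_subset_Ici_self).aestronglyMeasurable measurableSet_Ioi) hL hτ
  have hF_int := integrableOn_exp_neg_mul_smul
    (hF_cont.aestronglyMeasurable measurableSet_Ioi) hK hτ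
  have hF_int' : IntegrableOn (fun s => (-τ) • (Real.exp (-τ * s) • F s)) (Ioi 0) :=
    hF_int.smul (-τ)
  have hlim : Tendsto (fun s => Real.exp (-τ * s) • F s) atTop (𝓝 0) := by
    have hexp_lim : Tendsto (fun s => Real.exp (-τ * s)) atTop (𝓝 0) :=
      Real.tendsto_exp_atBot.comp (tendsto_id.const_mul_atTop_of_neg (neg_neg_of_pos hτ))
    refine squeeze_zero_norm' (a := fun s => Real.exp (-τ * s) * K) ?_
      (by simpa using hexp_lim.mul_const K)
    filter_upwards [eventually_gt_atTop 0] with s hs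
    rw [norm_smul, Real.norm_of_nonneg (Real.exp_pos _).le]
    exact mul_le_mul_of_nonneg_left (hK s hs) (Real.exp_pos _).le
  have hFTC := integral_Ioi_of_hasDerivAt_of_tendsto
    (f := fun s => Real.exp (-τ * s) • F s)
    (f' := fun s => Real.exp (-τ * s) • u s + (-τ) • (Real.exp (-τ * s) • F s))
    ((hexp 0).continuousAt.continuousWithinAt.smul (continuousWithinAt_primitive_zero hu))
    (fun s hs => ((hexp s).smul (hasDerivAt_primitive_of_pos hu hs)).congr_deriv
      (by rw [smul_smul, add_comm]))
    (hu_int.add hF_int') hlim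
  rw [integral_add hu_int hF_int', integral_smul] at hFTC
  simpa [F, neg_smul, add_neg_eq_zero] using hFTC

theorem norm_integral_exp_neg_mul_smul_le_of_norm_primitive_le [CompleteSpace E] {K : ℝ}
    (hu : ContinuousOn u (Ici 0)) (hL : ∀ s > 0, ‖u s‖ ≤ L)
    (hK : ∀ t > 0, ‖∫ r in (0 : ℝ)..t, u r‖ ≤ K) (hτ : 0 < τ) :
    ‖∫ s in Ioi (0 : ℝ), Real.exp (-τ * s) • u s‖ ≤ K := by
  rw [integral_exp_neg_mul_smul_eq_smul_integral_primitive hu hL hK hτ, norm_smul,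
    Real.norm_of_nonneg hτ.le, ← le_div_iff₀' hτ]
  exact norm_integral_exp_neg_mul_smul_le hK hτ

theorem norm_integral_exp_neg_mul_smul_le_two_mul_div_add [CompleteSpace E] {N z : ℝ}
    (hz : 0 < z) (hu : ContinuousOn u (Ici 0)) (hN : ∀ s > 0, ‖u s‖ ≤ N)
    (hNz : ∀ t > 0, ‖∫ r in (0 : ℝ)..t, u r‖ ≤ N / z) (hτ : 0 < τ) :
    ‖∫ s in Ioi (0 : ℝ), Real.exp (-τ * s) • u s‖ ≤ 2 * N / (z + τ) := by
  have h_z := (le_div_iff₀ hz).1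
    (norm_integral_exp_neg_mul_smul_le_of_norm_primitive_le hu hN hNz hτ)
  have h_τ := (le_div_iff₀ hτ).1 (norm_integral_exp_neg_mul_smul_le hN hτ)
  rw [le_div_iff₀ (by positivity), mul_add]
  linarith

end Laplace

theorem integrableOn_inv_add_of_integrableOn_inv_one_add {ρ : Measure ℝ} {z : ℝ} (hz : 0 < z)
    (hρ : IntegrableOn (fun τ : ℝ => (1 + τ)⁻¹) (Ioi 0) ρ) :
    IntegrableOn (fun τ : ℝ => (z + τ)⁻¹) (Ioi 0) ρ := by
  refine (hρ.const_mul (max 1 z⁻¹)).mono'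
    (measurable_const.add measurable_id).inv.aestronglyMeasurable
    ((ae_restrict_iff' measurableSet_Ioi).2 (.of_forall fun τ (hτ : 0 < τ) => ?_))
  have hc₁ : 1 ≤ max 1 z⁻¹ := le_max_left _ _
  have hcz : 1 ≤ max 1 z⁻¹ * z := by
    rw [← inv_mul_cancel₀ hz.ne']; exact mul_le_mul_of_nonneg_right (le_max_right _ _) hz.le
  rw [Real.norm_of_nonneg (by positivity), ← div_eq_mul_inv, inv_eq_one_div,
    div_le_div_iff₀ (by positivity) (by positivity)]
  nlinarith

theorem norm_integral_exp_neg_mul_smul_semigroup_le {X : Type*} [NormedAddCommGroup X]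
    [NormedSpace ℂ X] [CompleteSpace X] (T : ℝ → X →L[ℂ] X) (M₀ : ℝ)
    (hTcont : ∀ x : X, ContinuousOn (fun t => T t x) (Ici 0))
    (hM0 : ∀ t : ℝ, 0 ≤ t → ‖T t‖ ≤ M₀) (B C : X →L[ℂ] X) (hB : B ≠ 0) (hC : C ≠ 0)
    (hBC : ∀ x : X, ∀ t : ℝ, 0 ≤ t → T t (C x) = C x - ∫ r in (0:ℝ)..t, T r (B x))
    (x : X) {τ : ℝ} (hτ : 0 < τ) :
    ‖∫ s in Ioi (0:ℝ), Real.exp (-τ * s) • T s (B x)‖ ≤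
      2 * (1 + M₀) * ‖B‖ * ‖x‖ * (‖B‖ / ‖C‖ + τ)⁻¹ := by
  have hM₀ : 0 ≤ M₀ := (norm_nonneg _).trans (hM0 0 le_rfl)
  have hT_le (t : ℝ) (ht : 0 ≤ t) (y : X) : ‖T t y‖ ≤ M₀ * ‖y‖ := (T t).le_of_opNorm_le (hM0 t ht) y
  have hN (s : ℝ) (hs : 0 < s) : ‖T s (B x)‖ ≤ (1 + M₀) * ‖B‖ * ‖x‖ := by
    nlinarith [hT_le s hs.le (B x), B.le_opNorm x, norm_nonneg (B x), norm_nonneg x]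
  have hNz (t : ℝ) (ht : 0 < t) :
      ‖∫ r in (0:ℝ)..t, T r (B x)‖ ≤ (1 + M₀) * ‖B‖ * ‖x‖ / (‖B‖ / ‖C‖) := by
    rw [← sub_sub_cancel (C x) (∫ r in (0:ℝ)..t, T r (B x)), ← hBC x t ht.le]
    calc ‖C x - T t (C x)‖ ≤ ‖C x‖ + M₀ * ‖C x‖ :=
          (norm_sub_le _ _).trans (by gcongr; exact hT_le t ht.le _)
      _ ≤ (1 + M₀) * (‖C‖ * ‖x‖) := by nlinarith [C.le_opNorm x]
      _ = (1 + M₀) * ‖B‖ * ‖x‖ / (‖B‖ / ‖C‖) := by field_simp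
  calc _ ≤ 2 * ((1 + M₀) * ‖B‖ * ‖x‖) / (‖B‖ / ‖C‖ + τ) :=
        norm_integral_exp_neg_mul_smul_le_two_mul_div_add (by positivity)
          (hTcont (B x)) hN hNz hτ
    _ = 2 * (1 + M₀) * ‖B‖ * ‖x‖ * (‖B‖ / ‖C‖ + τ)⁻¹ := by ring

theorem norm_integral_integral_exp_neg_mul_smul_semigroup_le {X : Type*} [NormedAddCommGroup X]
    [NormedSpace ℂ X] [CompleteSpace X] (T : ℝ → X →L[ℂ] X) (M₀ : ℝ)
    (hTcont : ∀ x : X, ContinuousOn (fun t => T t x) (Ici 0))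
    (hM0 : ∀ t : ℝ, 0 ≤ t → ‖T t‖ ≤ M₀) (B C : X →L[ℂ] X) (hB : B ≠ 0) (hC : C ≠ 0)
    (hBC : ∀ x : X, ∀ t : ℝ, 0 ≤ t → T t (C x) = C x - ∫ r in (0:ℝ)..t, T r (B x))
    (ρ : Measure ℝ) (hρ : IntegrableOn (fun τ : ℝ => (1 + τ)⁻¹) (Ioi 0) ρ) (x : X) :
    ‖∫ τ in Ioi (0:ℝ), (∫ s in Ioi (0:ℝ), Real.exp (-τ * s) • T s (B x)) ∂ρ‖ ≤
      2 * (1 + M₀) * ‖B‖ * ‖x‖ * ∫ τ in Ioi (0:ℝ), (‖B‖ / ‖C‖ + τ)⁻¹ ∂ρ := by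
  have hz : 0 < ‖B‖ / ‖C‖ := div_pos (norm_pos_iff.2 hB) (norm_pos_iff.2 hC)
  rw [← integral_const_mul]
  exact norm_integral_le_of_norm_le
    ((integrableOn_inv_add_of_integrableOn_inv_one_add hz hρ).const_mul _)
    ((ae_restrict_iff' measurableSet_Ioi).2 (.of_forall fun τ hτ =>
      norm_integral_exp_neg_mul_smul_semigroup_le T M₀ hTcont hM0 B C hB hC hBC x hτ))

theorem statement15_general {X : Type*} [NormedAddCommGroup X] [NormedSpace ℂ X] [CompleteSpace X]
    (T : ℝ → X →L[ℂ] X) (M₀ : ℝ)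
    (hTcont : ∀ x : X, ContinuousOn (fun t => T t x) (Ici 0))
    (hM0 : ∀ t : ℝ, 0 ≤ t → ‖T t‖ ≤ M₀)
    (B C : X →L[ℂ] X) (hB : B ≠ 0) (hC : C ≠ 0)
    (hBC : ∀ x : X, ∀ t : ℝ, 0 ≤ t → T t (C x) = C x - ∫ r in (0:ℝ)..t, T r (B x))
    (c₀ c₁ : ℝ) (hc₀ : 0 ≤ c₀) (hc₁ : 0 ≤ c₁)
    (ρ : Measure ℝ)
    (hρ : IntegrableOn (fun τ : ℝ => (1 + τ)⁻¹) (Ioi 0) ρ)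
    (x : X) :
    ‖c₀ • C x + c₁ • B x +
        ∫ τ in Ioi (0:ℝ), (∫ s in Ioi (0:ℝ), Real.exp (-τ * s) • T s (B x)) ∂ρ‖ ≤
      2 * (1 + M₀) * ‖B‖ *
        (c₀ / (‖B‖ / ‖C‖) + c₁ + ∫ τ in Ioi (0:ℝ), (‖B‖ / ‖C‖ + τ)⁻¹ ∂ρ) * ‖x‖ := by
  have hM₀ : 0 ≤ M₀ := (norm_nonneg _).trans (hM0 0 le_rfl)
  set I := ∫ τ in Ioi (0:ℝ), (‖B‖ / ‖C‖ + τ)⁻¹ ∂ρ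
  have h_laplace :=
    norm_integral_integral_exp_neg_mul_smul_semigroup_le T M₀ hTcont hM0 B C hB hC hBC ρ hρ x
  have h_C : ‖c₀ • C x‖ ≤ c₀ / (‖B‖ / ‖C‖) * (‖B‖ * ‖x‖) := by
    rw [norm_smul, Real.norm_of_nonneg hc₀]
    calc c₀ * ‖C x‖ ≤ c₀ * (‖C‖ * ‖x‖) := by gcongr; exact C.le_opNorm x
      _ = c₀ / (‖B‖ / ‖C‖) * (‖B‖ * ‖x‖) := by field_simp
  have h_B : ‖c₁ • B x‖ ≤ c₁ * (‖B‖ * ‖x‖) := by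
    rw [norm_smul, Real.norm_of_nonneg hc₁]
    exact mul_le_mul_of_nonneg_left (B.le_opNorm x) hc₁
  calc _ ≤ ‖c₀ • C x‖ + ‖c₁ • B x‖ +
        ‖∫ τ in Ioi (0:ℝ), (∫ s in Ioi (0:ℝ), Real.exp (-τ * s) • T s (B x)) ∂ρ‖ :=
        norm_add₃_le
    _ ≤ c₀ / (‖B‖ / ‖C‖) * (‖B‖ * ‖x‖) + c₁ * (‖B‖ * ‖x‖) + 2 * (1 + M₀) * ‖B‖ * ‖x‖ * I := by
        gcongr
    _ ≤ 2 * (1 + M₀) * (c₀ / (‖B‖ / ‖C‖) * (‖B‖ * ‖x‖)) + 2 * (1 + M₀) * (c₁ * (‖B‖ * ‖x‖)) +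
          2 * (1 + M₀) * ‖B‖ * ‖x‖ * I := by
        gcongr ?_ + ?_ + _ <;> exact le_mul_of_one_le_left (by positivity) (by linarith)
    _ = _ := by ring

/-- Theorem 6.12: for a bounded `C₀`-semigroup `T` with `‖T(t)‖ ≤ M₀`, nonzero bounded
operators `B`, `C` with `C = A⁻¹B` (encoded by `T(t)Cx = Cx - ∫₀^t T(r)Bx dr`), `a=‖B‖`,
`b=‖C‖`, and a Stieltjes function `f(z) = c₀/z + c₁ + ∫ (z+τ)⁻¹ dρ(τ)`:
`‖f(A)Bx‖ ≤ 2(1+M₀) a f(a/b) ‖x‖` for all `x`. -/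
theorem statement15 {X : Type*} [NormedAddCommGroup X] [NormedSpace ℂ X] [CompleteSpace X]
    (T : ℝ → X →L[ℂ] X) (M₀ : ℝ)
    (hT0 : T 0 = 1)
    (hTadd : ∀ s t : ℝ, 0 ≤ s → 0 ≤ t → T (s + t) = (T s).comp (T t))
    (hTcont : ∀ x : X, ContinuousOn (fun t => T t x) (Ici 0))
    (hM0 : ∀ t : ℝ, 0 ≤ t → ‖T t‖ ≤ M₀)
    (B C : X →L[ℂ] X) (hB : B ≠ 0) (hC : C ≠ 0)
    (hBC : ∀ x : X, ∀ t : ℝ, 0 ≤ t → T t (C x) = C x - ∫ r in (0:ℝ)..t, T r (B x))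
    (c₀ c₁ : ℝ) (hc₀ : 0 ≤ c₀) (hc₁ : 0 ≤ c₁)
    (ρ : Measure ℝ)
    (hρ : IntegrableOn (fun τ : ℝ => (1 + τ)⁻¹) (Ioi 0) ρ)
    (x : X) :
    ‖c₀ • C x + c₁ • B x +
        ∫ τ in Ioi (0:ℝ), (∫ s in Ioi (0:ℝ), Real.exp (-τ * s) • T s (B x)) ∂ρ‖ ≤
      2 * (1 + M₀) * ‖B‖ *
        (c₀ / (‖B‖ / ‖C‖) + c₁ + ∫ τ in Ioi (0:ℝ), (‖B‖ / ‖C‖ + τ)⁻¹ ∂ρ) * ‖x‖ :=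
  statement15_general T M₀ hTcont hM0 B C hB hC hBC c₀ c₁ hc₀ hc₁ ρ hρ x
end

section
/- Let φ ∈ Φ with φ(z) ≢ z, i.e. φ(z) = bz + ∫₀^∞ (1 − e^{−zs}) dμ(s) with b ≥ 0, μ a nonzero positive measure on (0,∞), b + ∫₀^∞ s dμ(s) = 1 and ∫₀^∞ s² dμ(s) < ∞. Then there exist c > 0 and T > 0 such that for all t ≥ T: |e^{−tφ(i/√t)} − e^{−i√t}| ≥ c and |e^{−tφ(−i/√t)} − e^{i√t}| ≥ c, where φ is extended to the closed right half-plane by the same Lévy–Khintchine formula. -/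
/-!
On the imaginary axis the drift term `b z` of `φ` is purely imaginary, so
`Re φ(iy) = ∫ (1 - cos ys) dμ(s)`. Since `1 - cos x ≥ 2x²/π²` for `|x| ≤ π`, once `t ≥ R²` this
gives `t · Re φ(±i/√t) ≥ (2/π²) ∫_{(0,R]} s² dμ(s) =: δ`, and `δ > 0` for large `R` because
`μ ≠ 0` on `(0,∞)`. Hence `|e^{-tφ(±i/√t)}| ≤ e^{-δ}`, while `|e^{∓i√t}| = 1`.
-/

open MeasureTheory Set Complex

section LevyKhintchine

variable {μ : Measure ℝ}

lemma integrableOn_one_sub_exp_neg_mul_I (hμ1 : IntegrableOn (fun s : ℝ => s) (Ioi 0) μ) (y : ℝ) :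
    IntegrableOn (fun s : ℝ => 1 - exp (-(y * I) * s)) (Ioi 0) μ := by
  refine Integrable.mono' (hμ1.norm.const_mul |y|) (by fun_prop) (ae_of_all _ fun s => ?_)
  calc ‖1 - exp (-(y * I) * s)‖ = ‖exp (I * ↑(-(y * s))) - 1‖ := by
        rw [norm_sub_rev]; push_cast; ring_nf
    _ ≤ ‖-(y * s)‖ := Real.norm_exp_I_mul_ofReal_sub_one_le
    _ = |y| * ‖s‖ := by simp

lemma integrableOn_one_sub_cos_mul (hμ1 : IntegrableOn (fun s : ℝ => s) (Ioi 0) μ) (y : ℝ) :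
    IntegrableOn (fun s : ℝ => 1 - Real.cos (y * s)) (Ioi 0) μ := by
  refine Integrable.mono' (hμ1.norm.const_mul |y|) (by fun_prop) (ae_of_all _ fun s => ?_)
  calc ‖1 - Real.cos (y * s)‖ = |Real.cos 0 - Real.cos (y * s)| := by simp
    _ ≤ |0 - y * s| := Real.abs_cos_sub_cos_le _ _
    _ = |y| * ‖s‖ := by simp [abs_mul]

lemma re_setIntegral_one_sub_exp_neg_mul_I (hμ1 : IntegrableOn (fun s : ℝ => s) (Ioi 0) μ)
    (y : ℝ) :
    (∫ s in Ioi 0, (1 - exp (-(y * I) * s)) ∂μ).re = ∫ s in Ioi 0, (1 - Real.cos (y * s)) ∂μ := by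
  change RCLike.re (K := ℂ) _ = _
  rw [← integral_re (integrableOn_one_sub_exp_neg_mul_I hμ1 y)]
  refine integral_congr_ae (ae_of_all _ fun s => ?_)
  change (1 - exp (-(y * I) * s)).re = _
  rw [sub_re, one_re, show -(y * I) * s = ((-(y * s) : ℝ) : ℂ) * I by push_cast; ring,
    exp_ofReal_mul_I_re, Real.cos_neg]

lemma re_levyKhintchine_mul_I {b : ℝ} {φ : ℂ → ℂ}
    (hμ1 : IntegrableOn (fun s : ℝ => s) (Ioi 0) μ)
    (hφ : ∀ z : ℂ, 0 ≤ z.re →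
      φ z = (b:ℂ) * z + ∫ s in Ioi (0:ℝ), (1 - Complex.exp (-z * s)) ∂μ) (y : ℝ) :
    (φ (y * I)).re = ∫ s in Ioi 0, (1 - Real.cos (y * s)) ∂μ := by
  rw [hφ _ (by simp), add_re, re_setIntegral_one_sub_exp_neg_mul_I hμ1]
  simp

lemma mul_setIntegral_sq_le_setIntegral_one_sub_cos {R y : ℝ}
    (hcos : IntegrableOn (fun s => 1 - Real.cos (y * s)) (Ioi 0) μ)
    (hsq : IntegrableOn (fun s : ℝ => s ^ 2) (Ioc 0 R) μ) (hyR : |y| * R ≤ Real.pi) :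
    2 / Real.pi ^ 2 * y ^ 2 * ∫ s in Ioc 0 R, s ^ 2 ∂μ
      ≤ ∫ s in Ioi 0, (1 - Real.cos (y * s)) ∂μ := calc
  _ = ∫ s in Ioc 0 R, 2 / Real.pi ^ 2 * (y * s) ^ 2 ∂μ := by
        rw [← integral_const_mul]; congr with s; ring
  _ ≤ ∫ s in Ioc 0 R, (1 - Real.cos (y * s)) ∂μ := by
        refine setIntegral_mono_on ?_ (hcos.mono_set Ioc_subset_Ioi_self) measurableSet_Ioc
          fun s hs => ?_
        · simp only [mul_pow, ← mul_assoc]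
          exact hsq.const_mul _
        · have : |y * s| ≤ Real.pi := by
            rw [abs_mul, abs_of_pos hs.1]
            exact (mul_le_mul_of_nonneg_left hs.2 (abs_nonneg y)).trans hyR
          linarith [Real.cos_le_one_sub_mul_cos_sq this]
  _ ≤ _ := setIntegral_mono_set hcos (ae_of_all _ fun s => by simp [Real.cos_le_one])
        Ioc_subset_Ioi_self.eventuallyLE

lemma setIntegral_sq_le_mul_re_levyKhintchine {b R t y : ℝ} {φ : ℂ → ℂ}
    (hμ1 : IntegrableOn (fun s : ℝ => s) (Ioi 0) μ)
    (hμ2 : IntegrableOn (fun s : ℝ => s ^ 2) (Ioi 0) μ)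
    (hφ : ∀ z : ℂ, 0 ≤ z.re →
      φ z = (b:ℂ) * z + ∫ s in Ioi (0:ℝ), (1 - Complex.exp (-z * s)) ∂μ)
    (hR : 0 < R) (ht : R ^ 2 ≤ t) (hy : |y| = 1 / √t) :
    2 / Real.pi ^ 2 * ∫ s in Ioc 0 R, s ^ 2 ∂μ ≤ t * (φ (y * I)).re := by
  have ht0 : 0 < t := (pow_pos hR 2).trans_le ht
  have hyR : |y| * R ≤ Real.pi := calc
    |y| * R ≤ 1 := by
      rw [hy, one_div_mul_eq_div, div_le_one (by positivity)]
      exact (Real.le_sqrt' hR).2 ht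
    _ ≤ Real.pi := by linarith [Real.pi_gt_three]
  have hy2 : y ^ 2 = 1 / t := by rw [← sq_abs, hy, div_pow, Real.sq_sqrt ht0.le, one_pow]
  have hre := mul_setIntegral_sq_le_setIntegral_one_sub_cos (integrableOn_one_sub_cos_mul hμ1 y)
    (hμ2.mono_set Ioc_subset_Ioi_self) hyR
  rw [← re_levyKhintchine_mul_I hμ1 hφ, hy2] at hre
  calc 2 / Real.pi ^ 2 * ∫ s in Ioc 0 R, s ^ 2 ∂μ
      = t * (2 / Real.pi ^ 2 * (1 / t) * ∫ s in Ioc 0 R, s ^ 2 ∂μ) := by field_simp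
    _ ≤ t * (φ (y * I)).re := by gcongr

lemma exists_pos_setIntegral_sq_Ioc (hμ0 : μ.restrict (Ioi 0) ≠ 0)
    (hμ2 : IntegrableOn (fun s : ℝ => s ^ 2) (Ioi 0) μ) :
    ∃ R > 0, 0 < ∫ s in Ioc 0 R, s ^ 2 ∂μ := by
  obtain ⟨n, hn⟩ : ∃ n : ℕ, μ (Ioc 0 (n + 1)) ≠ 0 := by
    by_contra! h
    refine hμ0 (Measure.restrict_eq_zero.2 (measure_mono_null (fun s hs => ?_)
      (measure_iUnion_null h)))
    obtain ⟨n, hn⟩ := exists_nat_ge s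
    exact mem_iUnion.2 ⟨n, hs, by linarith⟩
  refine ⟨n + 1, by positivity, ?_⟩
  rw [setIntegral_pos_iff_support_of_nonneg_ae (ae_of_all _ fun s => sq_nonneg s)
    (hμ2.mono_set Ioc_subset_Ioi_self), inter_eq_right.2 fun s hs => by simp [hs.1.ne']]
  exact pos_iff_ne_zero.2 hn

end LevyKhintchine

lemma one_sub_exp_neg_le_norm_exp_sub_exp {δ : ℝ} {z w : ℂ} (hz : δ ≤ -z.re) (hw : w.re = 0) :
    1 - Real.exp (-δ) ≤ ‖exp z - exp w‖ := calc
  1 - Real.exp (-δ) ≤ ‖exp w‖ - ‖exp z‖ := by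
    rw [norm_exp, norm_exp, hw, Real.exp_zero]; gcongr; linarith
  _ ≤ ‖exp z - exp w‖ := norm_sub_rev (exp z) (exp w) ▸ norm_sub_norm_le _ _

theorem statement17_general (b : ℝ) (μ : Measure ℝ)
    (hμ1 : IntegrableOn (fun s : ℝ => s) (Ioi 0) μ)
    (hμ2 : IntegrableOn (fun s : ℝ => s ^ 2) (Ioi 0) μ)
    (hμ0 : μ.restrict (Ioi 0) ≠ 0)
    (φ : ℂ → ℂ)
    (hφ : ∀ z : ℂ, 0 ≤ z.re →
      φ z = (b:ℂ) * z + ∫ s in Ioi (0:ℝ), (1 - Complex.exp (-z * s)) ∂μ) :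
    ∃ c > (0:ℝ), ∃ T > (0:ℝ), ∀ t : ℝ, T ≤ t →
      c ≤ ‖(Complex.exp (-(t:ℂ) * φ (Complex.I / (Real.sqrt t : ℂ))) -
            Complex.exp (-(Complex.I * (Real.sqrt t : ℂ))))‖ ∧
      c ≤ ‖(Complex.exp (-(t:ℂ) * φ (-Complex.I / (Real.sqrt t : ℂ))) -
            Complex.exp (Complex.I * (Real.sqrt t : ℂ)))‖ := by
  obtain ⟨R, hR, hK⟩ := exists_pos_setIntegral_sq_Ioc hμ0 hμ2
  set δ := 2 / Real.pi ^ 2 * ∫ s in Ioc 0 R, s ^ 2 ∂μ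
  have hδ : 0 < δ := mul_pos (by positivity) hK
  refine ⟨1 - Real.exp (-δ), sub_pos.2 (Real.exp_lt_one_iff.2 (neg_lt_zero.2 hδ)),
    R ^ 2, by positivity, fun t ht => ?_⟩
  have hexponent : ∀ y : ℝ, |y| = 1 / √t → δ ≤ -(-(t:ℂ) * φ (y * I)).re := fun y hy => by
    simpa using setIntegral_sq_le_mul_re_levyKhintchine hμ1 hμ2 hφ hR ht hy
  have hy : |1 / √t| = 1 / √t := abs_of_nonneg (by positivity)
  constructor
  · rw [show I / √t = ((1 / √t : ℝ) : ℂ) * I by push_cast; ring]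
    exact one_sub_exp_neg_le_norm_exp_sub_exp (hexponent _ hy) (by simp)
  · rw [show -I / √t = ((-(1 / √t) : ℝ) : ℂ) * I by push_cast; ring]
    exact one_sub_exp_neg_le_norm_exp_sub_exp (hexponent _ ((abs_neg _).trans hy)) (by simp)

/-- Lemma 7.1: for `φ ∈ Φ` with `φ(z) ≢ z` (Lévy data `(b, μ)`, `μ ≠ 0`), there exist
`c > 0` and `T > 0` such that `|e^(-tφ(±i/√t)) - e^(∓i√t)| ≥ c` for all `t ≥ T`, where
`φ(z) = bz + ∫ (1 - e^(-zs)) dμ(s)` on the closed right half-plane. -/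
theorem statement17 (b : ℝ) (hb : 0 ≤ b) (μ : Measure ℝ)
    (hμ1 : IntegrableOn (fun s : ℝ => s) (Ioi 0) μ)
    (hμ2 : IntegrableOn (fun s : ℝ => s ^ 2) (Ioi 0) μ)
    (hmom : b + ∫ s in Ioi (0:ℝ), s ∂μ = 1)
    (hμ0 : μ.restrict (Ioi 0) ≠ 0)
    (φ : ℂ → ℂ)
    (hφ : ∀ z : ℂ, 0 ≤ z.re →
      φ z = (b:ℂ) * z + ∫ s in Ioi (0:ℝ), (1 - Complex.exp (-z * s)) ∂μ) :
    ∃ c > (0:ℝ), ∃ T > (0:ℝ), ∀ t : ℝ, T ≤ t →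
      c ≤ ‖(Complex.exp (-(t:ℂ) * φ (Complex.I / (Real.sqrt t : ℂ))) -
            Complex.exp (-(Complex.I * (Real.sqrt t : ℂ))))‖ ∧
      c ≤ ‖(Complex.exp (-(t:ℂ) * φ (-Complex.I / (Real.sqrt t : ℂ))) -
            Complex.exp (Complex.I * (Real.sqrt t : ℂ)))‖ :=
  statement17_general b μ hμ1 hμ2 hμ0 φ hφ
end

section
/- Let φ ∈ Φ with φ(z) ≢ z, i.e. φ(z) = bz + ∫₀^∞ (1 − e^{−zs}) dμ(s) with b ≥ 0, μ a nonzero positive measure on (0,∞), b + ∫₀^∞ s dμ(s) = 1 and ∫₀^∞ s² dμ(s) < ∞. Then there exist δ > 0 and c > 0 such that for all τ ∈ (0, δ]: e^{−φ(τ)/τ} − e^{−1} ≥ c τ. -/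
open MeasureTheory Set

/-!
Write `ψ(x) = x - 1 + e^{-x}` (`negExpRemainder`). The moment condition `b + ∫ s dμ = 1`
turns the Lévy–Khintchine formula into `φ(τ) = τ - ∫ ψ(τ s) dμ(s)`. Since `ψ` is nondecreasing
on `[0, ∞)` and `ψ(x) ≥ x² / 4` on `[0, 1]`, choosing `a > 0` with `μ [a, ∞) > 0` gives
`∫ ψ(τ s) dμ ≥ μ [a, ∞) (τ a)² / 4 = K τ²` for `τ ≤ 1 / a`. Hence `-φ(τ)/τ ≥ -1 + K τ`, and
`e^{-1 + Kτ} ≥ e^{-1} (1 + K τ)`.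
-/

noncomputable def negExpRemainder (x : ℝ) : ℝ := x - 1 + Real.exp (-x)

lemma negExpRemainder_nonneg (x : ℝ) : 0 ≤ negExpRemainder x := by
  unfold negExpRemainder
  linarith [Real.add_one_le_exp (-x)]

lemma negExpRemainder_le_self {x : ℝ} (hx : 0 ≤ x) : negExpRemainder x ≤ x := by
  unfold negExpRemainder
  linarith [Real.exp_le_one_iff.mpr (neg_nonpos.mpr hx)]

lemma monotoneOn_negExpRemainder : MonotoneOn negExpRemainder (Ici 0) := by
  intro u hu v _ huv
  have hsplit : Real.exp (-v) = Real.exp (-u) * Real.exp (u - v) := by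
    rw [← Real.exp_add]; ring_nf
  have hexp_u : Real.exp (-u) ≤ 1 := Real.exp_le_one_iff.mpr (neg_nonpos.mpr hu)
  have hexp_uv := Real.add_one_le_exp (u - v)
  unfold negExpRemainder
  nlinarith [Real.exp_pos (-u)]

lemma sq_div_four_le_negExpRemainder {x : ℝ} (h0 : 0 ≤ x) (h1 : x ≤ 1) :
    x ^ 2 / 4 ≤ negExpRemainder x := by
  have hx : |-x| ≤ 1 := by rwa [abs_neg, abs_of_nonneg h0]
  have htaylor := abs_le.mp (Real.exp_bound hx (n := 3) (by norm_num))
  rw [abs_neg, abs_of_nonneg h0] at htaylor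
  norm_num [Finset.sum_range_succ, Nat.factorial] at htaylor
  unfold negExpRemainder
  nlinarith [pow_nonneg h0 3]

section LevyMeasure

variable {μ : Measure ℝ}

lemma integrableOn_negExpRemainder_mul (hμ1 : IntegrableOn (fun s : ℝ => s) (Ioi 0) μ)
    {τ : ℝ} (hτ : 0 ≤ τ) :
    IntegrableOn (fun s => negExpRemainder (τ * s)) (Ioi 0) μ := by
  have hcont : Continuous fun s => negExpRemainder (τ * s) := by
    unfold negExpRemainder; fun_prop
  refine (hμ1.const_mul τ).mono hcont.aestronglyMeasurable ?_
  filter_upwards [ae_restrict_mem measurableSet_Ioi] with s hs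
  have hτs : 0 ≤ τ * s := mul_nonneg hτ (le_of_lt hs)
  rw [Real.norm_of_nonneg (negExpRemainder_nonneg _), Real.norm_of_nonneg hτs]
  exact negExpRemainder_le_self hτs

lemma setIntegral_one_sub_exp_eq (hμ1 : IntegrableOn (fun s : ℝ => s) (Ioi 0) μ)
    {τ : ℝ} (hτ : 0 ≤ τ) :
    ∫ s in Ioi (0:ℝ), (1 - Real.exp (-τ * s)) ∂μ
      = τ * (∫ s in Ioi (0:ℝ), s ∂μ) - ∫ s in Ioi (0:ℝ), negExpRemainder (τ * s) ∂μ := by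
  rw [← integral_const_mul, ← integral_sub (hμ1.const_mul τ)
    (integrableOn_negExpRemainder_mul hμ1 hτ)]
  congr 1 with s
  unfold negExpRemainder
  ring_nf

lemma exists_pos_measureReal_Ici_pos (hμ1 : IntegrableOn (fun s : ℝ => s) (Ioi 0) μ)
    (hμ0 : μ.restrict (Ioi 0) ≠ 0) : ∃ a > 0, 0 < μ.real (Ici a) := by
  have hIoi : μ (Ioi 0) ≠ 0 := by rwa [Ne, Measure.restrict_eq_zero] at hμ0
  obtain ⟨n, hn⟩ : ∃ n : ℕ, μ (Ici (1 / ((n : ℝ) + 1))) ≠ 0 := by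
    by_contra! h
    rw [← iUnion_Ici_eq_Ioi_of_lt_of_tendsto (fun n => by positivity)
      tendsto_one_div_add_atTop_nhds_zero_nat] at hIoi
    exact hIoi (measure_iUnion_null h)
  set a : ℝ := 1 / ((n : ℝ) + 1)
  have ha : 0 < a := by positivity
  have hfin : μ.restrict (Ioi 0) {s | a ≤ s} < ⊤ := hμ1.measure_ge_lt_top ha
  rw [show {s : ℝ | a ≤ s} = Ici a from rfl, Measure.restrict_apply measurableSet_Ici,
    inter_eq_left.mpr (Ici_subset_Ioi.mpr ha)] at hfin
  exact ⟨a, ha, ENNReal.toReal_pos hn hfin.ne⟩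

lemma measureReal_Ici_mul_sq_le_setIntegral (hμ1 : IntegrableOn (fun s : ℝ => s) (Ioi 0) μ)
    {a τ : ℝ} (ha : 0 < a) (hτ : 0 ≤ τ) (hτa : τ * a ≤ 1) :
    μ.real (Ici a) * (τ * a) ^ 2 / 4 ≤ ∫ s in Ioi (0:ℝ), negExpRemainder (τ * s) ∂μ := by
  have hsub : Ici a ⊆ Ioi 0 := Ici_subset_Ioi.mpr ha
  have hint := integrableOn_negExpRemainder_mul hμ1 hτ
  by_cases hfin : μ (Ici a) = ⊤
  · rw [measureReal_def, hfin, ENNReal.toReal_top, zero_mul, zero_div]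
    exact setIntegral_nonneg measurableSet_Ioi fun s _ => negExpRemainder_nonneg _
  calc μ.real (Ici a) * (τ * a) ^ 2 / 4
      = (τ * a) ^ 2 / 4 * μ.real (Ici a) := by ring
    _ ≤ ∫ s in Ici a, negExpRemainder (τ * s) ∂μ := by
      refine setIntegral_ge_of_const_le_real measurableSet_Ici hfin (fun s hs => ?_)
        (hint.mono_set hsub)
      have hτa₀ : 0 ≤ τ * a := mul_nonneg hτ ha.le
      have hτas : τ * a ≤ τ * s := mul_le_mul_of_nonneg_left hs hτ
      exact (sq_div_four_le_negExpRemainder hτa₀ hτa).trans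
        (monotoneOn_negExpRemainder hτa₀ (hτa₀.trans hτas) hτas)
    _ ≤ ∫ s in Ioi (0:ℝ), negExpRemainder (τ * s) ∂μ :=
      setIntegral_mono_set hint
        (ae_of_all _ fun _ => negExpRemainder_nonneg _) hsub.eventuallyLE

end LevyMeasure

theorem statement18_general (b : ℝ) (μ : Measure ℝ)
    (hμ1 : IntegrableOn (fun s : ℝ => s) (Ioi 0) μ)
    (hmom : b + ∫ s in Ioi (0:ℝ), s ∂μ = 1)
    (hμ0 : μ.restrict (Ioi 0) ≠ 0)
    (φ : ℝ → ℝ)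
    (hφ : ∀ τ : ℝ, 0 ≤ τ →
      φ τ = b * τ + ∫ s in Ioi (0:ℝ), (1 - Real.exp (-τ * s)) ∂μ) :
    ∃ δ > (0:ℝ), ∃ c > (0:ℝ), ∀ τ : ℝ, τ ∈ Ioc (0:ℝ) δ →
      c * τ ≤ Real.exp (-(φ τ) / τ) - Real.exp (-1) := by
  obtain ⟨a, ha, hma⟩ := exists_pos_measureReal_Ici_pos hμ1 hμ0
  set K := μ.real (Ici a) * a ^ 2 / 4
  have hK : 0 < K := by positivity
  refine ⟨1 / a, by positivity, Real.exp (-1) * K, by positivity, ?_⟩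
  rintro τ ⟨hτ, hτδ⟩
  have hτa : τ * a ≤ 1 := by rwa [le_div_iff₀ ha] at hτδ
  have hφτ : φ τ ≤ τ - K * τ ^ 2 := by
    have hquad := measureReal_Ici_mul_sq_le_setIntegral hμ1 ha hτ.le hτa
    have hKτ : K * τ ^ 2 = μ.real (Ici a) * (τ * a) ^ 2 / 4 := by ring
    rw [hφ τ hτ.le, setIntegral_one_sub_exp_eq hμ1 hτ.le, eq_sub_of_add_eq' hmom]
    linarith
  have hexponent : -1 + K * τ ≤ -φ τ / τ := by
    rw [le_div_iff₀ hτ]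
    nlinarith
  calc Real.exp (-1) * K * τ = Real.exp (-1) * (1 + K * τ) - Real.exp (-1) := by ring
    _ ≤ Real.exp (-1) * Real.exp (K * τ) - Real.exp (-1) := by
      gcongr; linarith [Real.add_one_le_exp (K * τ)]
    _ ≤ Real.exp (-φ τ / τ) - Real.exp (-1) := by
      rw [← Real.exp_add]; gcongr

/-- Lemma 7.2: for `φ ∈ Φ` with `φ(z) ≢ z` (Lévy data `(b, μ)`, `μ ≠ 0`), there exist
`δ > 0` and `c > 0` such that `e^(-φ(τ)/τ) - e^(-1) ≥ cτ` for all `τ ∈ (0, δ]`, where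
`φ(τ) = bτ + ∫ (1 - e^(-τs)) dμ(s)`. -/
theorem statement18 (b : ℝ) (hb : 0 ≤ b) (μ : Measure ℝ)
    (hμ1 : IntegrableOn (fun s : ℝ => s) (Ioi 0) μ)
    (hμ2 : IntegrableOn (fun s : ℝ => s ^ 2) (Ioi 0) μ)
    (hmom : b + ∫ s in Ioi (0:ℝ), s ∂μ = 1)
    (hμ0 : μ.restrict (Ioi 0) ≠ 0)
    (φ : ℝ → ℝ)
    (hφ : ∀ τ : ℝ, 0 ≤ τ →
      φ τ = b * τ + ∫ s in Ioi (0:ℝ), (1 - Real.exp (-τ * s)) ∂μ) :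
    ∃ δ > (0:ℝ), ∃ c > (0:ℝ), ∀ τ : ℝ, τ ∈ Ioc (0:ℝ) δ →
      c * τ ≤ Real.exp (-(φ τ) / τ) - Real.exp (-1) :=
  statement18_general b μ hμ1 hmom hμ0 φ hφ
end
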